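/- arXiv:2102.11177 — 10 statements merged into one kernel-verified Lean document; each statement's English description precedes it below -/
import Mathlib

section
/- Let G be a finite group. A subset S of G is a maximal clique of the enhanced power graph of G if and only if S is the underlying set of a maximal cyclic subgroup of G (a subgroup that is cyclic and is maximal among cyclic subgroups of G under inclusion). -/
open SimpleGraph

/-- The power graph of a group: distinct `x`,`y` adjacent iff one is a power of the other. -/
def powGraph (G : Type*) [Group G] : SimpleGraph G where
  Adj x y := x ≠ y ∧ (x ∈ Subgroup.zpowers y ∨ y ∈ Subgroup.zpowers x)
  symm := ⟨fun _ _ h => ⟨h.1.symm, h.2.symm⟩⟩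
  loopless := ⟨fun _ h => h.1 rfl⟩

/-- The enhanced power graph of a group: distinct `x`,`y` adjacent iff `⟨x,y⟩` is cyclic. -/
def epowGraph (G : Type*) [Group G] : SimpleGraph G where
  Adj x y := x ≠ y ∧ IsCyclic (Subgroup.closure ({x, y} : Set G))
  symm := by
    constructor
    intro x y h
    refine ⟨h.1.symm, ?_⟩
    rw [Set.pair_comm]
    exact h.2
  loopless := ⟨fun _ h => h.1 rfl⟩

/-- The commuting graph of a group: distinct `x`,`y` adjacent iff `x*y = y*x`. -/
def comGraph (G : Type*) [Group G] : SimpleGraph G where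
  Adj x y := x ≠ y ∧ Commute x y
  symm := ⟨fun _ _ h => ⟨h.1.symm, h.2.symm⟩⟩
  loopless := ⟨fun _ h => h.1 rfl⟩

/-- The non-generating graph of a group: distinct `x`,`y` adjacent iff `⟨x,y⟩ ≠ G`. -/
def ngenGraph (G : Type*) [Group G] : SimpleGraph G where
  Adj x y := x ≠ y ∧ Subgroup.closure ({x, y} : Set G) ≠ ⊤
  symm := by
    constructor
    intro x y h
    refine ⟨h.1.symm, ?_⟩
    rw [Set.pair_comm]
    exact h.2
  loopless := ⟨fun _ h => h.1 rfl⟩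

/-- The generating graph of a group: distinct `x`,`y` adjacent iff `⟨x,y⟩ = G`. -/
def genGraph (G : Type*) [Group G] : SimpleGraph G where
  Adj x y := x ≠ y ∧ Subgroup.closure ({x, y} : Set G) = ⊤
  symm := by
    constructor
    intro x y h
    refine ⟨h.1.symm, ?_⟩
    rw [Set.pair_comm]
    exact h.2
  loopless := ⟨fun _ h => h.1 rfl⟩

/-!
All orders in a clique of `epowGraph G` divide `n = |G|`; induct on `n`. For `n = p ^ k` the
orders are powers of `p`, so the clique element `s` of largest order generates every other
element `t`, as `⟨s, t⟩` is cyclic. For `n = a * b` with `a`, `b` coprime, the `b`-th and `a`-th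
powers of the clique are cliques generating cyclic groups `⟨g⟩`, `⟨h⟩` with `g ^ a = h ^ b = 1`;
as the clique commutes, `⟨g * h⟩` contains `g` and `h`, hence `s ^ a` and `s ^ b`, hence each
clique element `s`. So cliques generate cyclic subgroups, which are themselves cliques: a maximal
clique is its own closure, and a clique containing a maximal cyclic subgroup lies in it.
-/

open Subgroup

theorem IsCyclic.mem_zpowers_of_orderOf_dvd {α : Type*} [Group α] [Finite α] [IsCyclic α]
    {x y : α} (h : orderOf x ∣ orderOf y) : x ∈ zpowers y := by
  classical
  have := Fintype.ofFinite α
  have hsub : (zpowers y : Set α).toFinset ⊆ ({a | a ^ orderOf y = 1} : Finset α) := by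
    intro a ha
    simpa using orderOf_dvd_iff_pow_eq_one.mp (orderOf_dvd_of_mem_zpowers (by simpa using ha))
  have hcard : ({a | a ^ orderOf y = 1} : Finset α).card ≤ (zpowers y : Set α).toFinset.card := by
    rw [Set.toFinset_card, ← Nat.card_eq_fintype_card, SetLike.coe_sort_coe, Nat.card_zpowers]
    exact IsCyclic.card_pow_eq_one_le (orderOf_pos y)
  have hx : x ∈ ({a | a ^ orderOf y = 1} : Finset α) := by
    simpa using orderOf_dvd_iff_pow_eq_one.mp h
  rw [← Finset.eq_of_subset_of_card_le hsub hcard] at hx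
  simpa using hx

theorem Subgroup.mem_of_pow_mem_of_pow_mem_of_coprime {G : Type*} [Group G] {K : Subgroup G}
    {x : G} {a b : ℕ} (hab : a.Coprime b) (ha : x ^ a ∈ K) (hb : x ^ b ∈ K) : x ∈ K := by
  have hbezout : x = (x ^ a) ^ a.gcdA b * (x ^ b) ^ a.gcdB b := by
    rw [← zpow_natCast, ← zpow_natCast, ← zpow_mul, ← zpow_mul, ← zpow_add, ← Nat.gcd_eq_gcd_ab,
      hab.gcd_eq_one, Nat.cast_one, zpow_one]
  rw [hbezout]
  exact mul_mem (zpow_mem ha _) (zpow_mem hb _)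

theorem Commute.mem_zpowers_mul_of_coprime {G : Type*} [Group G] {g h : G} (hgh : Commute g h)
    {a b : ℕ} (hab : a.Coprime b) (hg : g ^ a = 1) (hh : h ^ b = 1) : g ∈ zpowers (g * h) := by
  obtain ⟨m, hm⟩ := exists_pow_eq_self_of_coprime
    (Nat.Coprime.coprime_dvd_right (orderOf_dvd_of_pow_eq_one hg) hab.symm)
  have hmem : ((g * h) ^ b) ^ m ∈ zpowers (g * h) := pow_mem (pow_mem (mem_zpowers _) _) _
  rwa [hgh.mul_pow, hh, mul_one, hm] at hmem

namespace epowGraph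

variable {G : Type*} [Group G]

theorem isClique_coe_of_isCyclic {K : Subgroup G} (hK : IsCyclic K) :
    (epowGraph G).IsClique (K : Set G) := fun _ hx _ hy hxy =>
  ⟨hxy, Subgroup.isCyclic_of_le (H' := K) ((closure_le K).mpr (Set.pair_subset hx hy))⟩

theorem commute_of_adj {x y : G} (h : (epowGraph G).Adj x y) : Commute x y := by
  let := @IsCyclic.commGroup _ _ h.2
  exact Subtype.ext_iff.mp (mul_comm (⟨x, subset_closure (by simp)⟩ : closure ({x, y} : Set G))
    ⟨y, subset_closure (by simp)⟩)

theorem mem_zpowers_of_adj_of_orderOf_dvd [Finite G] {x y : G} (h : (epowGraph G).Adj x y)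
    (hxy : orderOf x ∣ orderOf y) : x ∈ zpowers y := by
  have := h.2
  have hx : x ∈ closure ({x, y} : Set G) := subset_closure (by simp)
  have hy : y ∈ closure ({x, y} : Set G) := subset_closure (by simp)
  obtain ⟨k, hk⟩ := mem_zpowers_iff.mp
    (IsCyclic.mem_zpowers_of_orderOf_dvd (x := (⟨x, hx⟩ : closure ({x, y} : Set G)))
      (y := ⟨y, hy⟩) (by simpa using hxy))
  exact mem_zpowers_iff.mpr ⟨k, by simpa using congrArg Subtype.val hk⟩

theorem isClique_image_pow {S : Set G} (hS : (epowGraph G).IsClique S) (n : ℕ) :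
    (epowGraph G).IsClique ((· ^ n) '' S) := by
  rintro _ ⟨x, hx, rfl⟩ _ ⟨y, hy, rfl⟩ hxy
  refine ⟨hxy, ?_⟩
  have := (hS hx hy (ne_of_apply_ne (· ^ n) hxy)).2
  refine Subgroup.isCyclic_of_le (H' := closure {x, y})
    ((closure_le _).mpr (Set.pair_subset ?_ ?_))
  · exact pow_mem (subset_closure (by simp)) n
  · exact pow_mem (subset_closure (by simp)) n

theorem commute_of_mem_closure {S : Set G} (hS : (epowGraph G).IsClique S) {g h : G}
    (hg : g ∈ closure S) (hh : h ∈ closure S) : Commute g h := by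
  have hcomm : ∀ x ∈ S, ∀ y ∈ S, x * y = y * x := fun x hx y hy => by
    rcases eq_or_ne x y with rfl | hxy
    · rfl
    · exact commute_of_adj (hS hx hy hxy)
  exact Set.centralizer_centralizer_comm_of_comm hcomm g
    (closure_le_centralizer_centralizer S hg) h (closure_le_centralizer_centralizer S hh)

theorem exists_closure_eq_zpowers_of_pow_prime_pow_eq_one [Finite G] {p k : ℕ} (hp : p.Prime)
    {S : Set G} (hS : (epowGraph G).IsClique S) (hpow : ∀ s ∈ S, s ^ p ^ k = 1) :
    ∃ g, g ^ p ^ k = 1 ∧ closure S = zpowers g := by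
  rcases S.eq_empty_or_nonempty with rfl | hne
  · exact ⟨1, one_pow _, by rw [Subgroup.closure_empty, zpowers_one_eq_bot]⟩
  obtain ⟨s, hs, hmax⟩ := Set.exists_max_image S orderOf S.toFinite hne
  refine ⟨s, hpow s hs, le_antisymm ((closure_le _).mpr fun t ht => ?_)
    (zpowers_le.mpr (subset_closure hs))⟩
  rcases eq_or_ne t s with rfl | hts
  · exact mem_zpowers t
  obtain ⟨i, -, hi⟩ := (Nat.dvd_prime_pow hp).mp (orderOf_dvd_of_pow_eq_one (hpow t ht))
  obtain ⟨j, -, hj⟩ := (Nat.dvd_prime_pow hp).mp (orderOf_dvd_of_pow_eq_one (hpow s hs))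
  have hij : i ≤ j := (Nat.pow_le_pow_iff_right hp.one_lt).mp (hi ▸ hj ▸ hmax t ht)
  exact mem_zpowers_of_adj_of_orderOf_dvd (hS ht hs hts) (hi ▸ hj ▸ pow_dvd_pow p hij)

theorem exists_closure_eq_zpowers_of_pow_eq_one [Finite G] {n : ℕ} (hn : n ≠ 0) {S : Set G}
    (hS : (epowGraph G).IsClique S) (hpow : ∀ s ∈ S, s ^ n = 1) :
    ∃ g, g ^ n = 1 ∧ closure S = zpowers g := by
  induction n using Nat.recOnPosPrimePosCoprime generalizing S with
  | prime_pow p k hp _ => exact exists_closure_eq_zpowers_of_pow_prime_pow_eq_one hp hS hpow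
  | zero => exact absurd rfl hn
  | one =>
    refine ⟨1, one_pow _, ?_⟩
    rw [zpowers_one_eq_bot, closure_eq_bot_iff]
    exact fun s hs => by simpa using hpow s hs
  | coprime a b ha hb hab iha ihb =>
    obtain ⟨g, hg, hgS⟩ := iha (by omega) (isClique_image_pow hS b) (by
      rintro _ ⟨s, hs, rfl⟩
      rw [← pow_mul, mul_comm, hpow s hs])
    obtain ⟨h, hh, hhS⟩ := ihb (by omega) (isClique_image_pow hS a) (by
      rintro _ ⟨s, hs, rfl⟩
      rw [← pow_mul, hpow s hs])
    have hle : ∀ m : ℕ, Subgroup.closure ((· ^ m) '' S) ≤ closure S := fun m =>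
      (closure_le _).mpr (Set.image_subset_iff.mpr fun s hs => pow_mem (subset_closure hs) m)
    have hgS' : g ∈ closure S := hle b (hgS ▸ mem_zpowers g)
    have hhS' : h ∈ closure S := hle a (hhS ▸ mem_zpowers h)
    have hgh : Commute g h := commute_of_mem_closure hS hgS' hhS'
    have hg_mem : g ∈ zpowers (g * h) := hgh.mem_zpowers_mul_of_coprime hab hg hh
    have hh_mem : h ∈ zpowers (g * h) :=
      hgh.eq ▸ hgh.symm.mem_zpowers_mul_of_coprime hab.symm hh hg
    refine ⟨g * h, ?_, le_antisymm ?_ (zpowers_le.mpr (mul_mem hgS' hhS'))⟩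
    · rw [hgh.mul_pow, pow_mul, hg, one_pow, pow_mul', hh, one_pow, one_mul]
    refine (closure_le _).mpr fun s hs => mem_of_pow_mem_of_pow_mem_of_coprime hab ?_ ?_
    · exact zpowers_le.mpr hh_mem (hhS ▸ subset_closure ⟨s, hs, rfl⟩)
    · exact zpowers_le.mpr hg_mem (hgS ▸ subset_closure ⟨s, hs, rfl⟩)

theorem isCyclic_closure_of_isClique [Finite G] {S : Set G} (hS : (epowGraph G).IsClique S) :
    IsCyclic (closure S) := by
  obtain ⟨g, -, hg⟩ := exists_closure_eq_zpowers_of_pow_eq_one Nat.card_pos.ne' hS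
    fun s _ => pow_card_eq_one'
  exact hg ▸ isCyclic_zpowers g

end epowGraph

/-- In a finite group `G`, a subset `S` is a maximal clique of the enhanced power
graph iff `S` is the underlying set of a maximal cyclic subgroup of `G`. -/
theorem maximal_clique_epowGraph_iff_maximal_cyclic (G : Type*) [Group G] [Finite G]
    (S : Set G) :
    ((epowGraph G).IsClique S ∧ ∀ T : Set G, (epowGraph G).IsClique T → S ⊆ T → T = S) ↔
    (∃ H : Subgroup G, (H : Set G) = S ∧ IsCyclic H ∧
      ∀ K : Subgroup G, IsCyclic K → H ≤ K → K = H) := by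
  constructor
  · rintro ⟨hS, hmax⟩
    have hcyc : IsCyclic (closure S) := epowGraph.isCyclic_closure_of_isClique hS
    have hclosure : (closure S : Set G) = S :=
      hmax _ (epowGraph.isClique_coe_of_isCyclic hcyc) subset_closure
    refine ⟨closure S, hclosure, hcyc, fun K hK hle => SetLike.coe_injective ?_⟩
    exact (hmax _ (epowGraph.isClique_coe_of_isCyclic hK) (subset_closure.trans hle)).trans
      hclosure.symm
  · rintro ⟨H, rfl, hH, hmax⟩
    refine ⟨epowGraph.isClique_coe_of_isCyclic hH, fun T hT hHT => ?_⟩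
    have hclosure : closure T = H :=
      hmax _ (epowGraph.isCyclic_closure_of_isClique hT) fun x hx => subset_closure (hHT hx)
    exact Set.Subset.antisymm (hclosure ▸ subset_closure) hHT
end

section
/- For every finite group G, the power graph of G is a perfect graph; that is, for every subset A of G, the clique number of the induced subgraph of Pow(G) on A equals the chromatic number of that induced subgraph. -/
/-!
Order `G` by inclusion of cyclic subgroups, `⟨x⟩ ⊆ ⟨y⟩`, breaking ties between generators of
the same cyclic subgroup by an arbitrary injection `G → ℕ`. Two distinct elements are adjacent
in the power graph exactly when they are comparable, so every induced subgraph of `Pow(G)` is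
the comparability graph of a finite preorder. In such a graph a chain is a clique, and colouring
each vertex by its height (the length of the longest chain ending there) is proper, since
comparable vertices have different heights; it uses exactly as many colours as the longest chain
has vertices.
-/
open SimpleGraph

open Subgroup

namespace Order

variable {α : Type*} [Preorder α] [Finite α]

lemma height_lt_top_of_finite (x : α) : height x < ⊤ := by
  have := Fintype.ofFinite α
  refine (height_le fun p _ => ?_).trans_lt (ENat.natCast_lt_top (Fintype.card α))
  have := Fintype.card_le_of_injective p p.strictMono.injective
  rw [Fintype.card_fin] at this
  exact_mod_cast p.length.le_succ.trans this

lemma strictMono_toNat_height : StrictMono fun x : α => (height x).toNat := by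
  intro x y hxy
  have := height_strictMono hxy (height_lt_top_of_finite x)
  rwa [← ENat.natCast_toNat (height_lt_top_of_finite x).ne,
    ← ENat.natCast_toNat (height_lt_top_of_finite y).ne, Nat.cast_lt] at this

end Order

namespace SimpleGraph

def comparabilityGraph (V : Type*) [Preorder V] : SimpleGraph V where
  Adj x y := x < y ∨ y < x
  symm := ⟨fun _ _ => Or.symm⟩
  loopless := ⟨fun x h => h.elim (lt_irrefl x) (lt_irrefl x)⟩

variable {V : Type*} [Preorder V]

lemma isClique_range_ltSeries (p : LTSeries V) :
    (comparabilityGraph V).IsClique (Set.range p) := by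
  rintro _ ⟨i, rfl⟩ _ ⟨j, rfl⟩ hij
  rcases lt_or_gt_of_ne (ne_of_apply_ne p hij) with h | h
  · exact Or.inl (p.strictMono h)
  · exact Or.inr (p.strictMono h)

variable [Finite V]

lemma length_lt_cliqueNum_comparabilityGraph (p : LTSeries V) :
    p.length < (comparabilityGraph V).cliqueNum := by
  classical
  have hclique : (comparabilityGraph V).IsClique (Finset.univ.image p : Set V) := by
    simpa using isClique_range_ltSeries p
  calc p.length < (Finset.univ.image p).card := by
        rw [Finset.card_image_of_injective _ p.strictMono.injective, Finset.card_univ,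
          Fintype.card_fin]
        exact p.length.lt_succ_self
    _ ≤ _ := hclique.card_le_cliqueNum

lemma toNat_height_lt_cliqueNum_comparabilityGraph (x : V) :
    (Order.height x).toNat < (comparabilityGraph V).cliqueNum := by
  by_contra! h
  have hle : ((comparabilityGraph V).cliqueNum : ℕ∞) ≤ Order.height x := by
    rw [← ENat.natCast_toNat (Order.height_lt_top_of_finite x).ne]
    exact_mod_cast h
  obtain ⟨p, -, hp⟩ := Order.exists_series_of_le_height x hle
  exact (length_lt_cliqueNum_comparabilityGraph p).ne hp

noncomputable def heightColoring :
    (comparabilityGraph V).Coloring (Fin (comparabilityGraph V).cliqueNum) :=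
  Coloring.mk (fun x => ⟨_, toNat_height_lt_cliqueNum_comparabilityGraph x⟩) <| by
    rintro x y (h | h) hc
    · exact (Order.strictMono_toNat_height h).ne (Fin.val_eq_of_eq hc)
    · exact (Order.strictMono_toNat_height h).ne' (Fin.val_eq_of_eq hc)

theorem chromaticNumber_comparabilityGraph :
    (comparabilityGraph V).chromaticNumber = (comparabilityGraph V).cliqueNum :=
  le_antisymm (Colorable.chromaticNumber_le ⟨heightColoring⟩) cliqueNum_le_chromaticNumber

theorem chromaticNumber_eq_cliqueNum_of_adj_iff {W α : Type*} [Finite W] [Preorder α]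
    (H : SimpleGraph W) (f : W → α) (h : ∀ x y, H.Adj x y ↔ f x < f y ∨ f y < f x) :
    H.chromaticNumber = H.cliqueNum := by
  let := Preorder.lift f
  obtain rfl : H = comparabilityGraph W := SimpleGraph.ext (funext₂ fun x y => propext (h x y))
  exact chromaticNumber_comparabilityGraph

end SimpleGraph

lemma Prod.Lex.toLex_lt_or_gt_iff {α β : Type*} [PartialOrder α] [LinearOrder β] {a a' : α}
    {b b' : β} (hb : b ≠ b') :
    toLex (a, b) < toLex (a', b') ∨ toLex (a', b') < toLex (a, b) ↔ a ≤ a' ∨ a' ≤ a := by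
  simp only [Prod.Lex.toLex_lt_toLex, le_iff_lt_or_eq]
  grind

lemma powGraph_adj_iff {G : Type*} [Group G] {x y : G} :
    (powGraph G).Adj x y ↔ x ≠ y ∧ (zpowers x ≤ zpowers y ∨ zpowers y ≤ zpowers x) := by
  simp only [powGraph, zpowers_le]

lemma powGraph_adj_iff_lex {G β : Type*} [Group G] [LinearOrder β] {f : G → β}
    (hf : Function.Injective f) {x y : G} :
    (powGraph G).Adj x y ↔ toLex (zpowers x, f x) < toLex (zpowers y, f y) ∨
      toLex (zpowers y, f y) < toLex (zpowers x, f x) := by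
  obtain rfl | hxy := eq_or_ne x y
  · simp
  · rw [Prod.Lex.toLex_lt_or_gt_iff (hf.ne hxy), powGraph_adj_iff, and_iff_right hxy]

/-- The power graph of a finite group is perfect: every induced subgraph has
clique number equal to chromatic number. -/
theorem powGraph_perfect (G : Type*) [Group G] [Finite G] (A : Set G) :
    ((powGraph G).induce A).chromaticNumber = (((powGraph G).induce A).cliqueNum : ℕ∞) := by
  obtain ⟨f, hf⟩ := Countable.exists_injective_nat G
  exact chromaticNumber_eq_cliqueNum_of_adj_iff _ (fun x : A => toLex (zpowers (x : G), f x))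
    fun _ _ => powGraph_adj_iff_lex hf
end

section
/- Let G be a finite group. The power graph of G is equal to the enhanced power graph of G (i.e., they have the same edge set) if and only if G contains no element of order pq for any two distinct primes p and q (equivalently, G contains no subgroup isomorphic to C_p × C_q with p, q distinct primes). -/
open SimpleGraph

/-!
An edge of the enhanced power graph joins two elements of a common cyclic subgroup `⟨g⟩`.
If every element has prime power order, the subgroups of `⟨g⟩` form a chain, so one endpoint
is a power of the other. Conversely, for `x` of order `pq` the elements `x ^ p` and `x ^ q`
generate the cyclic group `⟨x⟩`, yet neither is a power of the other since their orders are
the distinct primes `q` and `p`.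
-/

open Subgroup

section

variable {G : Type*} [Group G]

theorem isCyclic_closure_pair_iff {x y : G} :
    IsCyclic (closure ({x, y} : Set G)) ↔ ∃ g : G, x ∈ zpowers g ∧ y ∈ zpowers g := by
  rw [Subgroup.isCyclic_iff_exists_zpowers_eq_top]
  constructor
  · rintro ⟨g, hg⟩
    exact ⟨g, hg ▸ subset_closure (by simp), hg ▸ subset_closure (by simp)⟩
  · rintro ⟨g, hx, hy⟩
    have hle : closure ({x, y} : Set G) ≤ zpowers g := by
      rw [closure_le, Set.pair_subset_iff]
      exact ⟨hx, hy⟩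
    exact (Subgroup.isCyclic_iff_exists_zpowers_eq_top _).mp (isCyclic_of_le hle)

theorem powGraph_le_epowGraph : powGraph G ≤ epowGraph G := by
  rintro x y ⟨hxy, hx | hy⟩
  · exact ⟨hxy, isCyclic_closure_pair_iff.mpr ⟨y, hx, mem_zpowers y⟩⟩
  · exact ⟨hxy, isCyclic_closure_pair_iff.mpr ⟨x, mem_zpowers x, hy⟩⟩

theorem pow_mem_zpowers_pow_of_gcd_dvd {g : G} {n a b : ℕ} (hn : g ^ n = 1)
    (hab : a.gcd n ∣ b) : g ^ b ∈ zpowers (g ^ a) := by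
  have hgcd : g ^ a.gcd n ∈ zpowers (g ^ a) := by
    have hbezout : g ^ (a.gcd n : ℤ) = (g ^ a) ^ a.gcdA n * (g ^ n) ^ a.gcdB n := by
      rw [Nat.gcd_eq_gcd_ab, zpow_add, zpow_mul, zpow_mul, zpow_natCast, zpow_natCast]
    rw [← zpow_natCast g (a.gcd n), hbezout, hn, one_zpow, mul_one]
    exact zpow_mem_zpowers _ _
  obtain ⟨c, rfl⟩ := hab
  rw [pow_mul]
  exact pow_mem hgcd c

theorem mem_zpowers_or_mem_zpowers_of_orderOf_eq_prime_pow {g x y : G} {p k : ℕ}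
    (hp : p.Prime) (hg : orderOf g = p ^ k) (hx : x ∈ zpowers g) (hy : y ∈ zpowers g) :
    x ∈ zpowers y ∨ y ∈ zpowers x := by
  have hfin : IsOfFinOrder g := orderOf_pos_iff.mp (hg ▸ pow_pos hp.pos k)
  obtain ⟨a, rfl⟩ := hfin.mem_powers_iff_mem_zpowers.mpr hx
  obtain ⟨b, rfl⟩ := hfin.mem_powers_iff_mem_zpowers.mpr hy
  have hn : g ^ p ^ k = 1 := hg ▸ pow_orderOf_eq_one g
  obtain ⟨i, -, hi⟩ := (Nat.dvd_prime_pow hp).mp (Nat.gcd_dvd_right a (p ^ k))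
  obtain ⟨j, -, hj⟩ := (Nat.dvd_prime_pow hp).mp (Nat.gcd_dvd_right b (p ^ k))
  rcases le_total i j with hij | hji
  · refine .inr (pow_mem_zpowers_pow_of_gcd_dvd hn ?_)
    rw [hi]
    exact (pow_dvd_pow p hij).trans (hj ▸ Nat.gcd_dvd_left b _)
  · refine .inl (pow_mem_zpowers_pow_of_gcd_dvd hn ?_)
    rw [hj]
    exact (pow_dvd_pow p hji).trans (hi ▸ Nat.gcd_dvd_left a _)

theorem exists_orderOf_eq_prime_pow {g : G} (hg : IsOfFinOrder g)
    (h : ∀ p q : ℕ, p.Prime → q.Prime → p ≠ q → ∀ x : G, orderOf x ≠ p * q) :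
    ∃ p k : ℕ, p.Prime ∧ orderOf g = p ^ k := by
  have hn : orderOf g ≠ 0 := hg.orderOf_pos.ne'
  rcases eq_or_ne (orderOf g) 1 with h1 | h1
  · exact ⟨2, 0, Nat.prime_two, h1⟩
  set p := (orderOf g).minFac
  have hp : p.Prime := Nat.minFac_prime h1
  have hunique : ∀ {q : ℕ}, q.Prime → q ∣ orderOf g → q = p := by
    intro q hq hqg
    by_contra hqp
    have hpq : p * q ∣ orderOf g :=
      ((Nat.coprime_primes hp hq).mpr (Ne.symm hqp)).mul_dvd_of_dvd_of_dvd
        (Nat.minFac_dvd _) hqg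
    exact h p q hp hq (Ne.symm hqp) _ (orderOf_pow_orderOf_div hn hpq)
  exact ⟨p, _, hp, Nat.eq_prime_pow_of_unique_prime_dvd hn hunique⟩

theorem powGraph_ne_epowGraph_of_orderOf_eq_mul {p q : ℕ} (hp : p.Prime) (hq : q.Prime)
    (hpq : p ≠ q) {x : G} (hx : orderOf x = p * q) : powGraph G ≠ epowGraph G := by
  have hxp : orderOf (x ^ p) = q := by
    rw [orderOf_pow_of_dvd hp.ne_zero (hx ▸ dvd_mul_right p q), hx,
      Nat.mul_div_cancel_left q hp.pos]
  have hxq : orderOf (x ^ q) = p := by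
    rw [orderOf_pow_of_dvd hq.ne_zero (hx ▸ dvd_mul_left q p), hx, Nat.mul_div_cancel p hq.pos]
  have hne : x ^ p ≠ x ^ q := fun h => hpq (hxq.symm.trans ((congrArg orderOf h).symm.trans hxp))
  have hadj : (epowGraph G).Adj (x ^ p) (x ^ q) :=
    ⟨hne, isCyclic_closure_pair_iff.mpr ⟨x, npow_mem_zpowers x p, npow_mem_zpowers x q⟩⟩
  intro hG
  rcases (hG ▸ hadj : (powGraph G).Adj (x ^ p) (x ^ q)).2 with h | h <;>
    have hdvd := orderOf_dvd_of_mem_zpowers h <;> rw [hxp, hxq] at hdvd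
  · exact hpq ((Nat.prime_dvd_prime_iff_eq hq hp).mp hdvd).symm
  · exact hpq ((Nat.prime_dvd_prime_iff_eq hp hq).mp hdvd)

end

/-- For a finite group `G`, the power graph equals the enhanced power graph iff
`G` has no element of order `p * q` for distinct primes `p`, `q`. -/
theorem powGraph_eq_epowGraph_iff (G : Type*) [Group G] [Finite G] :
    powGraph G = epowGraph G ↔
    ∀ p q : ℕ, p.Prime → q.Prime → p ≠ q → ∀ x : G, orderOf x ≠ p * q := by
  refine ⟨fun hG p q hp hq hpq x hx => powGraph_ne_epowGraph_of_orderOf_eq_mul hp hq hpq hx hG,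
    fun h => le_antisymm powGraph_le_epowGraph ?_⟩
  rintro x y ⟨hxy, hcyc⟩
  obtain ⟨g, hx, hy⟩ := isCyclic_closure_pair_iff.mp hcyc
  obtain ⟨p, k, hp, hg⟩ := exists_orderOf_eq_prime_pow (isOfFinOrder_of_finite g) h
  exact ⟨hxy, mem_zpowers_or_mem_zpowers_of_orderOf_eq_prime_pow hp hg hx hy⟩
end

section
/- Let G be a finite group. The enhanced power graph of G is equal to the commuting graph of G (i.e., they have the same edge set) if and only if G contains no subgroup isomorphic to C_p × C_p for any prime p. -/
open SimpleGraph

/-!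
Both conditions concern the finite abelian subgroups generated by two commuting elements:
the graphs agree exactly when all of these are cyclic. A copy of `C_p × C_p` is generated by
two commuting elements and is not cyclic. Conversely, a finite abelian group in which every
two elements generate a cyclic subgroup is cyclic, since an element `g` of maximal order
`e = exponent` already generates `⟨g, b⟩` for every `b`. If a finite abelian group is not
cyclic, lift an element of prime order `p` of `A/⟨g⟩` to `h`; writing `h ^ p = g ^ k`, the
relation `h ^ e = 1` forces `p ∣ k`, so `h * g ^ (-k/p)` has order `p` and lies outside `⟨g⟩`,
and with `g ^ (e/p)` it spans a copy of `C_p × C_p`.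
-/

open Subgroup

section Group

variable {G : Type*} [Group G]

lemma commute_of_isCyclic_closure_pair {x y : G} (h : IsCyclic (closure {x, y})) :
    Commute x y := by
  let := h.commGroup
  exact congrArg Subtype.val (mul_comm (⟨x, subset_closure (by simp)⟩ : closure {x, y})
    ⟨y, subset_closure (by simp)⟩)

lemma epowGraph_eq_comGraph_iff_forall_commute :
    epowGraph G = comGraph G ↔ ∀ x y : G, Commute x y → IsCyclic (closure {x, y}) := by
  constructor
  · intro h x y hxy
    by_cases hne : x = y
    · subst hne
      rw [Set.pair_eq_singleton, ← zpowers_eq_closure]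
      infer_instance
    · exact (h ▸ ⟨hne, hxy⟩ : (epowGraph G).Adj x y).2
  · intro h
    ext x y
    exact ⟨fun hadj => ⟨hadj.1, commute_of_isCyclic_closure_pair hadj.2⟩,
      fun hadj => ⟨hadj.1, h x y hadj.2⟩⟩

lemma exists_subgroup_mulEquiv_iff_exists_injective {M : Type*} [Group M] :
    (∃ H : Subgroup G, Nonempty (H ≃* M)) ↔ ∃ f : M →* G, Function.Injective f := by
  constructor
  · rintro ⟨H, ⟨e⟩⟩
    exact ⟨H.subtype.comp e.symm.toMonoidHom, H.subtype_injective.comp e.symm.injective⟩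
  · rintro ⟨f, hf⟩
    exact ⟨f.range, ⟨(MonoidHom.ofInjective hf).symm⟩⟩

lemma isCyclic_closure_pair_of_injective {M : Type*} [Group M] {f : M →* G}
    (hf : Function.Injective f) {a b : M} (h : IsCyclic (closure {f a, f b})) :
    IsCyclic (closure {a, b}) := by
  rw [← Set.image_pair, ← MonoidHom.map_closure] at h
  exact ((closure {a, b}).equivMapOfInjective f hf).isCyclic.mpr h

lemma disjoint_zpowers_of_prime_orderOf {H : Subgroup G} {y : G} (hy : (orderOf y).Prime)
    (hyH : y ∉ H) : Disjoint H (zpowers y) := by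
  have : Finite (zpowers y) :=
    Nat.finite_of_card_ne_zero (by rw [Nat.card_zpowers]; exact hy.ne_zero)
  have hdvd : Nat.card ↥(H ⊓ zpowers y) ∣ orderOf y :=
    Nat.card_zpowers y ▸ card_dvd_of_le inf_le_right
  rcases hy.eq_one_or_self_of_dvd _ hdvd with h1 | hp
  · exact disjoint_iff.mpr (card_eq_one.mp h1)
  · have heq : H ⊓ zpowers y = zpowers y :=
      eq_of_le_of_card_ge inf_le_right (by rw [hp, Nat.card_zpowers])
    exact absurd (heq.ge (mem_zpowers y)).1 hyH

lemma exists_injective_zmod_prod_of_commute {p : ℕ} (hp : p.Prime) {x y : G}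
    (hxy : Commute x y) (hx : orderOf x = p) (hy : orderOf y = p) (hyx : y ∉ zpowers x) :
    ∃ f : Multiplicative (ZMod p × ZMod p) →* G, Function.Injective f := by
  have : NeZero p := ⟨hp.ne_zero⟩
  have zmodEquiv {z : G} (hz : orderOf z = p) : Multiplicative (ZMod p) ≃* zpowers z :=
    mulEquivOfCyclicCardEq (by rw [Nat.card_zpowers, hz, Nat.card_eq_fintype_card,
      Fintype.card_multiplicative, ZMod.card])
  have hcomm : ∀ (a : zpowers x) (b : zpowers y),
      Commute ((zpowers x).subtype a) ((zpowers y).subtype b) := by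
    rintro ⟨_, i, rfl⟩ ⟨_, j, rfl⟩
    exact hxy.zpow_zpow i j
  let f := (zpowers x).subtype.noncommCoprod (zpowers y).subtype hcomm
  have hf : Function.Injective f := by
    refine (MonoidHom.noncommCoprod_injective _ _ _).mpr
      ⟨subtype_injective _, subtype_injective _, ?_⟩
    rw [range_subtype, range_subtype]
    exact disjoint_zpowers_of_prime_orderOf (hy ▸ hp) hyx
  let e : Multiplicative (ZMod p × ZMod p) ≃* zpowers x × zpowers y :=
    (MulEquiv.prodMultiplicative ..).trans ((zmodEquiv hx).prodCongr (zmodEquiv hy))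
  exact ⟨f.comp e.toMonoidHom, hf.comp e.injective⟩

lemma not_isCyclic_multiplicative_zmod_prod {p : ℕ} (hp : p.Prime) :
    ¬ IsCyclic (Multiplicative (ZMod p × ZMod p)) := by
  rw [isCyclic_multiplicative_iff, AddGroup.isAddCyclic_prod_iff, Nat.card_zmod,
    Nat.coprime_self]
  exact fun h => hp.ne_one h.2.2

end Group

section CommGroup
variable {A : Type*} [CommGroup A] [Finite A]

lemma isCyclic_of_forall_isCyclic_closure_pair (h : ∀ a b : A, IsCyclic (closure {a, b})) :
    IsCyclic A := by
  obtain ⟨g, hg⟩ := Monoid.exists_orderOf_eq_exponent (G := A) .of_finite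
  refine ⟨g, fun b => show b ∈ zpowers g from ?_⟩
  obtain ⟨c, hc⟩ := (closure {g, b}).isCyclic_iff_exists_zpowers_eq_top.mp (h g b)
  have hgc : zpowers g ≤ zpowers c := zpowers_le.mpr (hc ▸ subset_closure (by simp))
  have hcg : zpowers g = zpowers c := eq_of_le_of_card_ge hgc <| by
    rw [Nat.card_zpowers, Nat.card_zpowers, hg]
    exact Monoid.orderOf_le_exponent .of_finite c
  rw [hcg, hc]
  exact subset_closure (by simp)

lemma exists_pow_eq_one_notMem_zpowers {g h : A} (hg : orderOf g = Monoid.exponent A) {p : ℕ}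
    (hpg : p ∣ orderOf g) (hh : h ∉ zpowers g) (hhp : h ^ p ∈ zpowers g) :
    ∃ y : A, y ^ p = 1 ∧ y ∉ zpowers g := by
  obtain ⟨m, hm⟩ := hpg
  obtain ⟨k, hk : g ^ k = h ^ p⟩ := mem_powers_iff_mem_zpowers.mpr hhp
  have hpk : p ∣ k := by
    have hkm : g ^ (k * m) = 1 := by
      rw [pow_mul, hk, ← pow_mul, ← hm, hg, Monoid.pow_exponent_eq_one]
    have hm0 : m ≠ 0 := by rintro rfl; exact (orderOf_pos g).ne' hm
    exact Nat.dvd_of_mul_dvd_mul_right (Nat.pos_of_ne_zero hm0)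
      (hm ▸ orderOf_dvd_of_pow_eq_one hkm)
  obtain ⟨j, rfl⟩ := hpk
  refine ⟨h * (g ^ j)⁻¹, ?_, fun hy => hh ?_⟩
  · rw [mul_pow, inv_pow, ← pow_mul, mul_comm j p, hk, mul_inv_cancel]
  · simpa using mul_mem hy (pow_mem (mem_zpowers g) j)

lemma exists_injective_zmod_prod_of_not_isCyclic (hA : ¬ IsCyclic A) :
    ∃ p : ℕ, p.Prime ∧ ∃ f : Multiplicative (ZMod p × ZMod p) →* A, Function.Injective f := by
  obtain ⟨g, hg⟩ := Monoid.exists_orderOf_eq_exponent (G := A) .of_finite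
  have hne : zpowers g ≠ ⊤ := fun htop => hA (isCyclic_iff_exists_zpowers_eq_top.mpr ⟨g, htop⟩)
  obtain ⟨p, hp, hpdvd⟩ := Nat.exists_prime_and_dvd (one_lt_index_of_ne_top hne).ne'
  have := Fact.mk hp
  obtain ⟨q, hq⟩ := exists_prime_orderOf_dvd_card' (G := A ⧸ zpowers g) p hpdvd
  obtain ⟨h, rfl⟩ := QuotientGroup.mk_surjective q
  have hpg : p ∣ orderOf g := hg ▸ hq ▸
    (orderOf_map_dvd (QuotientGroup.mk' _) h).trans (Monoid.order_dvd_exponent h)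
  have hh : h ∉ zpowers g := by
    rw [← QuotientGroup.eq_one_iff, ← orderOf_eq_one_iff, hq]
    exact hp.ne_one
  have hhp : h ^ p ∈ zpowers g := by
    rw [← QuotientGroup.eq_one_iff, QuotientGroup.mk_pow, ← hq, pow_orderOf_eq_one]
  obtain ⟨y, hyp, hy⟩ := exists_pow_eq_one_notMem_zpowers hg hpg hh hhp
  refine ⟨p, hp, exists_injective_zmod_prod_of_commute hp (Commute.all _ y)
    (orderOf_pow_orderOf_div (orderOf_pos g).ne' hpg)
    (orderOf_eq_prime hyp fun hy1 => hy (hy1 ▸ one_mem _)) fun hmem => hy ?_⟩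
  exact zpowers_le.mpr (pow_mem (mem_zpowers g) _) hmem

end CommGroup

/-- For a finite group `G`, the enhanced power graph equals the commuting graph iff
`G` has no subgroup isomorphic to `C_p × C_p` for any prime `p`. -/
theorem epowGraph_eq_comGraph_iff (G : Type*) [Group G] [Finite G] :
    epowGraph G = comGraph G ↔
    ∀ p : ℕ, p.Prime →
      ¬ ∃ H : Subgroup G, Nonempty (H ≃* Multiplicative (ZMod p × ZMod p)) := by
  simp only [epowGraph_eq_comGraph_iff_forall_commute,
    exists_subgroup_mulEquiv_iff_exists_injective]
  constructor
  · rintro h p hp ⟨f, hf⟩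
    have : NeZero p := ⟨hp.ne_zero⟩
    refine not_isCyclic_multiplicative_zmod_prod hp
      (isCyclic_of_forall_isCyclic_closure_pair fun a b => ?_)
    exact isCyclic_closure_pair_of_injective hf (h _ _ ((Commute.all a b).map f))
  · intro h x y hxy
    have : IsMulCommutative (closure {x, y}) := isMulCommutative_closure <| by
      rintro a (rfl | rfl) b (rfl | rfl)
      exacts [rfl, hxy, hxy.symm, rfl]
    by_contra hK
    open scoped IsMulCommutative in
    obtain ⟨p, hp, f, hf⟩ := exists_injective_zmod_prod_of_not_isCyclic hK
    exact h p hp ⟨(closure {x, y}).subtype.comp f, (subtype_injective _).comp hf⟩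
end

section
/- Let G₁ and G₂ be finite groups whose commuting graphs are isomorphic as simple graphs. Then G₁ and G₂ have the same order (hence the same set of prime divisors of the order), and for all distinct primes p and q, G₁ contains an element of order pq if and only if G₂ contains an element of order pq; that is, the Gruenberg–Kegel graphs of G₁ and G₂ are equal. -/
open SimpleGraph

/-! A maximal clique `s` of the commuting graph is its own centralizer, hence a maximal abelian
subgroup, and a graph isomorphism carries maximal cliques to maximal cliques of the same size.
So it suffices to read "`G` has an element of order `p * q`" off the sizes of the maximal
cliques. If `orderOf x = p * q`, then `⟨x⟩` lies in a maximal clique whose order it divides;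
conversely, if `p * q` divides the order of the abelian subgroup `s`, Cauchy's theorem gives
commuting elements of orders `p` and `q` in `s`, and their product has order `p * q`. -/

namespace SimpleGraph

variable {V W : Type*} {G : SimpleGraph V} {H : SimpleGraph W}

theorem Iso.isClique_image_iff (e : G ≃g H) {s : Set V} :
    H.IsClique (e '' s) ↔ G.IsClique s := by
  rw [IsClique, IsClique, e.injective.injOn.pairwise_image]
  simp only [Set.Pairwise, e.map_adj_iff]

theorem Iso.maximal_isClique_image (e : G ≃g H) {s : Set V} (hs : Maximal G.IsClique s) :
    Maximal H.IsClique (e '' s) := by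
  refine ⟨e.isClique_image_iff.2 hs.prop, fun t ht hst => ?_⟩
  have hsub : s ⊆ e.symm '' t := by
    rw [← e.toEquiv.symm_image_image s]
    exact Set.image_mono hst
  rw [← e.toEquiv.image_symm_image t]
  exact Set.image_mono (hs.2 (e.symm.isClique_image_iff.2 ht) hsub)

theorem Iso.exists_maximal_isClique_card (e : G ≃g H) {P : ℕ → Prop}
    (h : ∃ s, Maximal G.IsClique s ∧ P (Nat.card s)) :
    ∃ t, Maximal H.IsClique t ∧ P (Nat.card t) := by
  obtain ⟨s, hs, hP⟩ := h
  exact ⟨e '' s, e.maximal_isClique_image hs, by rwa [Nat.card_image_of_injective e.injective]⟩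

end SimpleGraph

theorem exists_orderOf_eq_mul_of_dvd_card {A : Type*} [Group A] [IsMulCommutative A] [Finite A]
    {p q : ℕ} (hp : p.Prime) (hq : q.Prime) (hpq : p ≠ q) (hdvd : p * q ∣ Nat.card A) :
    ∃ x : A, orderOf x = p * q := by
  have := Fact.mk hp
  have := Fact.mk hq
  obtain ⟨a, ha⟩ := exists_prime_orderOf_dvd_card' p (dvd_of_mul_right_dvd hdvd)
  obtain ⟨b, hb⟩ := exists_prime_orderOf_dvd_card' q (dvd_of_mul_left_dvd hdvd)
  have hcop : (orderOf a).Coprime (orderOf b) := ha ▸ hb ▸ (Nat.coprime_primes hp hq).2 hpq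
  have hab : Commute a b := mul_comm' a b
  exact ⟨a * b, by rw [hab.orderOf_mul_eq_mul_orderOf_of_coprime hcop, ha, hb]⟩

section CommutingGraph

variable {G : Type*} [Group G]

theorem comGraph_isClique_iff {s : Set G} : (comGraph G).IsClique s ↔ s.Pairwise Commute :=
  ⟨fun h _ hx _ hy hxy => (h hx hy hxy).2, fun h _ hx _ hy hxy => ⟨hxy, h hx hy hxy⟩⟩

theorem coe_centralizer_eq_of_maximal_isClique {s : Set G}
    (hs : Maximal (comGraph G).IsClique s) : (Subgroup.centralizer s : Set G) = s := by
  have hcomm : s.Pairwise Commute := comGraph_isClique_iff.1 hs.prop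
  ext z
  refine ⟨fun hz => hs.mem_of_prop_insert ?_,
    fun hz _ hy => Set.pairwise_iff_of_refl.1 hcomm hy hz⟩
  exact comGraph_isClique_iff.2
    (Set.pairwise_insert_of_symm.2 ⟨hcomm, fun y hy _ => (hz y hy).symm⟩)

theorem exists_maximal_isClique_orderOf_dvd_card [Finite G] (x : G) :
    ∃ s, Maximal (comGraph G).IsClique s ∧ orderOf x ∣ Nat.card s := by
  have hx : (comGraph G).IsClique (Subgroup.zpowers x : Set G) := by
    rintro _ ⟨m, rfl⟩ _ ⟨n, rfl⟩ hne
    exact ⟨hne, (Commute.refl x).zpow_zpow m n⟩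
  obtain ⟨s, hxs, hs⟩ := Finite.exists_le_maximal hx
  have hK := coe_centralizer_eq_of_maximal_isClique hs
  refine ⟨s, hs, ?_⟩
  rw [← Nat.card_zpowers, ← hK]
  exact Subgroup.card_dvd_of_le fun _ hg => hK.symm.subset (hxs hg)

theorem exists_orderOf_eq_mul_of_maximal_isClique [Finite G] {p q : ℕ} (hp : p.Prime)
    (hq : q.Prime) (hpq : p ≠ q) {s : Set G} (hs : Maximal (comGraph G).IsClique s)
    (hdvd : p * q ∣ Nat.card s) : ∃ x : G, orderOf x = p * q := by
  have hK := coe_centralizer_eq_of_maximal_isClique hs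
  have : IsMulCommutative (Subgroup.centralizer s) :=
    Subgroup.le_centralizer_iff_isMulCommutative.1 (by rw [hK])
  obtain ⟨x, hx⟩ := exists_orderOf_eq_mul_of_dvd_card hp hq hpq (hK ▸ hdvd)
  exact ⟨x, (Subgroup.orderOf_coe x).trans hx⟩

theorem exists_orderOf_eq_mul_iff_exists_maximal_isClique [Finite G] {p q : ℕ} (hp : p.Prime)
    (hq : q.Prime) (hpq : p ≠ q) :
    (∃ x : G, orderOf x = p * q) ↔
      ∃ s, Maximal (comGraph G).IsClique s ∧ p * q ∣ Nat.card s :=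
  ⟨fun ⟨x, hx⟩ => hx ▸ exists_maximal_isClique_orderOf_dvd_card x,
    fun ⟨_, hs, hdvd⟩ => exists_orderOf_eq_mul_of_maximal_isClique hp hq hpq hs hdvd⟩

end CommutingGraph

/-- Finite groups with isomorphic commuting graphs have the same order and equal
Gruenberg–Kegel graphs: for distinct primes `p`,`q`, one group has an element of order `p*q`
iff the other does. -/
theorem comGraph_iso_implies_GK_eq (G₁ G₂ : Type*) [Group G₁] [Finite G₁] [Group G₂] [Finite G₂]
    (h : Nonempty (comGraph G₁ ≃g comGraph G₂)) :
    Nat.card G₁ = Nat.card G₂ ∧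
    ∀ p q : ℕ, p.Prime → q.Prime → p ≠ q →
      ((∃ x : G₁, orderOf x = p * q) ↔ (∃ y : G₂, orderOf y = p * q)) := by
  obtain ⟨e⟩ := h
  refine ⟨Nat.card_congr e.toEquiv, fun p q hp hq hpq => ?_⟩
  rw [exists_orderOf_eq_mul_iff_exists_maximal_isClique hp hq hpq,
    exists_orderOf_eq_mul_iff_exists_maximal_isClique hp hq hpq]
  exact ⟨e.exists_maximal_isClique_card, e.symm.exists_maximal_isClique_card⟩
end

section
/- Let G be a finite group and let m be the clique number of the power graph of G. Then the clique number of the enhanced power graph of G is at most the least common multiple of the integers 1, 2, …, m. -/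
open SimpleGraph

/-!
Let `C` be a clique of the enhanced power graph. Any two of its elements lie in a common cyclic
subgroup, so `C` is pairwise commuting and `|C| ≤ |⟨C⟩|`. Fix a prime `p` and let `N` be the
`p'`-part of `|G|`. Raising to the `N`-th power is a homomorphism on the abelian group `⟨C⟩` with
values in `p`-elements; the images of two elements of `C` are `p`-elements of one cyclic group,
so one is a power of the other, and all of them are powers of the image `w` of largest order. Hence
`⟨C⟩ ^ N ≤ ⟨w⟩`. As `N` is prime to `p`, this power map permutes every `p`-subgroup of `⟨C⟩`, so
such a subgroup lies in `⟨w⟩`, a cyclic `p`-group and therefore a clique of the power graph. Every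
prime power dividing `|⟨C⟩|` is thus at most `ω(Pow G)`, and `|⟨C⟩|` divides
`lcm(1, …, ω(Pow G))`.
-/

open Subgroup

section

variable {G : Type*} [Group G]

theorem mem_zpowers_of_orderOf_dvd [Finite G] {c x y : G} (hx : x ∈ zpowers c)
    (hy : y ∈ zpowers c) (hxy : orderOf x ∣ orderOf y) : x ∈ zpowers y := by
  set d := orderOf y
  have hd : d ∣ orderOf c := orderOf_dvd_of_mem_zpowers hy
  set t := c ^ (orderOf c / d)
  have ht : ∀ z ∈ zpowers c, z ^ d = 1 → z ∈ zpowers t := by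
    intro z hz hzd
    obtain ⟨i, rfl⟩ := (isOfFinOrder_of_finite c).mem_powers_iff_mem_zpowers.mpr hz
    have hdvd : orderOf c / d * d ∣ i * d := by
      rw [Nat.div_mul_cancel hd, orderOf_dvd_iff_pow_eq_one, pow_mul, hzd]
    obtain ⟨k, rfl⟩ := Nat.dvd_of_mul_dvd_mul_right (orderOf_pos y) hdvd
    show c ^ (orderOf c / d * k) ∈ zpowers t
    rw [pow_mul]
    exact npow_mem_zpowers t k
  have hyt : zpowers y = zpowers t := by
    refine eq_of_le_of_card_ge (zpowers_le.mpr (ht y hy (pow_orderOf_eq_one y))) ?_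
    rw [Nat.card_zpowers, Nat.card_zpowers, orderOf_pow_orderOf_div (orderOf_pos c).ne' hd]
  rw [hyt]
  exact ht x hx (orderOf_dvd_iff_pow_eq_one.mp hxy)

theorem powGraph_isClique_zpowers [Finite G] {p k : ℕ} (hp : p.Prime) {w : G}
    (hw : orderOf w = p ^ k) : (powGraph G).IsClique (zpowers w : Set G) := by
  intro x hx y hy hxy
  refine ⟨hxy, ?_⟩
  obtain ⟨i, -, hi⟩ := (Nat.dvd_prime_pow hp).mp (hw ▸ orderOf_dvd_of_mem_zpowers hx)
  obtain ⟨j, -, hj⟩ := (Nat.dvd_prime_pow hp).mp (hw ▸ orderOf_dvd_of_mem_zpowers hy)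
  rcases le_total i j with h | h
  · exact .inl (mem_zpowers_of_orderOf_dvd hx hy (hi ▸ hj ▸ pow_dvd_pow p h))
  · exact .inr (mem_zpowers_of_orderOf_dvd hy hx (hi ▸ hj ▸ pow_dvd_pow p h))

theorem orderOf_le_cliqueNum_powGraph [Finite G] {p k : ℕ} (hp : p.Prime) {w : G}
    (hw : orderOf w = p ^ k) : orderOf w ≤ (powGraph G).cliqueNum := by
  have hfin := (zpowers w : Set G).toFinite
  calc orderOf w = (zpowers w : Set G).ncard := by
        rw [← Nat.card_zpowers, ← Nat.card_coe_set_eq]; rfl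
    _ = hfin.toFinset.card := Set.ncard_eq_toFinset_card _ hfin
    _ ≤ (powGraph G).cliqueNum :=
        IsClique.card_le_cliqueNum (tc := by simpa using powGraph_isClique_zpowers hp hw)

theorem exists_mem_zpowers_of_epowGraph_adj {x y : G} (h : (epowGraph G).Adj x y) :
    ∃ c, x ∈ zpowers c ∧ y ∈ zpowers c := by
  obtain ⟨c, hc⟩ := (closure {x, y}).isCyclic_iff_exists_zpowers_eq_top.mp h.2
  exact ⟨c, hc ▸ subset_closure (by simp), hc ▸ subset_closure (by simp)⟩

theorem commute_of_mem_zpowers {c x y : G} (hx : x ∈ zpowers c) (hy : y ∈ zpowers c) :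
    Commute x y := by
  obtain ⟨i, rfl⟩ := mem_zpowers_iff.mp hx
  obtain ⟨j, rfl⟩ := mem_zpowers_iff.mp hy
  exact (Commute.refl c).zpow_zpow i j

theorem commute_of_isClique_epowGraph {C : Set G} (hC : (epowGraph G).IsClique C) {x y : G}
    (hx : x ∈ C) (hy : y ∈ C) : Commute x y := by
  rcases eq_or_ne x y with rfl | hxy
  · exact Commute.refl x
  obtain ⟨c, hxc, hyc⟩ := exists_mem_zpowers_of_epowGraph_adj (hC hx hy hxy)
  exact commute_of_mem_zpowers hxc hyc

theorem pow_mem_of_mem_closure {S : Set G} {K : Subgroup G} (n : ℕ)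
    (hS : ∀ x ∈ S, ∀ y ∈ S, Commute x y) (hK : ∀ x ∈ S, x ^ n ∈ K) {g : G}
    (hg : g ∈ closure S) : g ^ n ∈ K := by
  have hcomm : ∀ a ∈ closure S, ∀ b ∈ closure S, Commute a b := fun a ha b hb =>
    Set.centralizer_centralizer_comm_of_comm hS a (closure_le_centralizer_centralizer S ha)
      b (closure_le_centralizer_centralizer S hb)
  induction hg using closure_induction with
  | mem x hx => exact hK x hx
  | one => simp
  | mul a b ha hb iha ihb => rw [(hcomm a ha b hb).mul_pow]; exact mul_mem iha ihb
  | inv a _ ih => rw [inv_pow]; exact inv_mem ih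

theorem orderOf_pow_ordCompl_dvd (p : ℕ) (x : G) :
    orderOf (x ^ ordCompl[p] (Nat.card G)) ∣ p ^ (Nat.card G).factorization p :=
  orderOf_dvd_of_pow_eq_one <| by
    rw [← pow_mul, mul_comm, Nat.ordProj_mul_ordCompl_eq_self, pow_card_eq_one']

theorem exists_pow_ordCompl_mem_zpowers [Finite G] {p : ℕ} (hp : p.Prime) {C : Set G}
    (hC : (epowGraph G).IsClique C) : ∃ w : G, ∃ j : ℕ, orderOf w = p ^ j ∧
      ∀ g ∈ closure C, g ^ ordCompl[p] (Nat.card G) ∈ zpowers w := by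
  set N := ordCompl[p] (Nat.card G)
  rcases C.eq_empty_or_nonempty with rfl | hne
  · refine ⟨1, 0, by simp, fun g hg => ?_⟩
    rw [Subgroup.closure_empty, mem_bot] at hg
    simp [hg]
  obtain ⟨x₀, hx₀, hmax⟩ := C.exists_max_image (fun x => orderOf (x ^ N)) C.toFinite hne
  obtain ⟨j, -, hj⟩ := (Nat.dvd_prime_pow hp).mp (orderOf_pow_ordCompl_dvd p x₀)
  refine ⟨x₀ ^ N, j, hj, fun g hg => pow_mem_of_mem_closure N
    (fun x hx y hy => commute_of_isClique_epowGraph hC hx hy) (fun x hx => ?_) hg⟩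
  rcases eq_or_ne x x₀ with rfl | hxx₀
  · exact mem_zpowers _
  obtain ⟨c, hxc, hx₀c⟩ := exists_mem_zpowers_of_epowGraph_adj (hC hx hx₀ hxx₀)
  obtain ⟨i, -, hi⟩ := (Nat.dvd_prime_pow hp).mp (orderOf_pow_ordCompl_dvd p x)
  refine mem_zpowers_of_orderOf_dvd (pow_mem hxc N) (pow_mem hx₀c N) ?_
  rw [hi, hj, Nat.pow_dvd_pow_iff_le_right hp.one_lt, ← Nat.pow_le_pow_iff_right hp.one_lt,
    ← hi, ← hj]
  exact hmax x hx

theorem le_of_forall_pow_mem_of_coprime {Q K : Subgroup G} {n : ℕ}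
    (hQ : (Nat.card Q).Coprime n) (h : ∀ q ∈ Q, q ^ n ∈ K) : Q ≤ K := by
  intro q hq
  obtain ⟨r, hr⟩ := (powCoprime hQ).surjective ⟨q, hq⟩
  have hrq : (r : G) ^ n = q := congrArg Subtype.val hr
  exact hrq ▸ h r r.2

theorem prime_pow_le_cliqueNum_powGraph [Finite G] {C : Set G} (hC : (epowGraph G).IsClique C)
    {p k : ℕ} (hp : p.Prime) (hpk : p ^ k ∣ Nat.card (closure C)) :
    p ^ k ≤ (powGraph G).cliqueNum := by
  have : Fact p.Prime := ⟨hp⟩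
  obtain ⟨Q, hQ⟩ := Sylow.exists_subgroup_card_pow_prime p hpk
  obtain ⟨w, j, hw, hmem⟩ := exists_pow_ordCompl_mem_zpowers hp hC
  have hQG : Nat.card (Q.map (closure C).subtype) = p ^ k := (card_subtype _ _).trans hQ
  have hle : Q.map (closure C).subtype ≤ zpowers w := by
    refine le_of_forall_pow_mem_of_coprime (n := ordCompl[p] (Nat.card G)) ?_ ?_
    · rw [hQG]
      exact (Nat.coprime_ordCompl hp Nat.card_pos.ne').pow_left k
    · rintro _ ⟨q, -, rfl⟩
      exact hmem q q.2
  calc p ^ k = Nat.card (Q.map (closure C).subtype) := hQG.symm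
    _ ≤ Nat.card (zpowers w) := card_le_of_le hle
    _ = orderOf w := Nat.card_zpowers w
    _ ≤ (powGraph G).cliqueNum := orderOf_le_cliqueNum_powGraph hp hw

theorem natCard_closure_dvd_lcm [Finite G] {C : Set G} (hC : (epowGraph G).IsClique C) :
    Nat.card (closure C) ∣ (Finset.Icc 1 (powGraph G).cliqueNum).lcm id :=
  (Nat.dvd_iff_prime_pow_dvd_dvd _ _).mpr fun p k hp hpk => Finset.dvd_lcm <|
    Finset.mem_Icc.mpr ⟨Nat.one_le_pow k p hp.pos, prime_pow_le_cliqueNum_powGraph hC hp hpk⟩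

end

/-- For a finite group `G` with `m` the clique number of the power graph, the
clique number of the enhanced power graph is at most `lcm(1, 2, …, m)`. -/
theorem cliqueNum_epow_le_lcm (G : Type*) [Group G] [Finite G] :
    (epowGraph G).cliqueNum ≤ (Finset.Icc 1 ((powGraph G).cliqueNum)).lcm id := by
  obtain ⟨C, hC⟩ := (epowGraph G).exists_isNClique_cliqueNum
  have hL : (Finset.Icc 1 ((powGraph G).cliqueNum)).lcm id ≠ 0 := by
    simp [Finset.lcm_eq_zero_iff]
  calc (epowGraph G).cliqueNum = (C : Set G).ncard := by rw [Set.ncard_coe_finset, hC.card_eq]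
    _ ≤ (closure (C : Set G) : Set G).ncard := Set.ncard_le_ncard subset_closure
    _ = Nat.card (closure (C : Set G)) := Nat.card_coe_set_eq _ |>.symm
    _ ≤ _ := Nat.le_of_dvd (Nat.pos_of_ne_zero hL) (natCard_closure_dvd_lcm hC.isClique)
end

section
/- Let G be a finite group and let S be the set of orders of elements of G. Then the chromatic number of the enhanced power graph of G is at most the sum over n ∈ S of φ(n), where φ is Euler's totient function. -/
open SimpleGraph

/-! Colour `x` by the pair `(n, k)`, where `n` is the order of `x` and `x = g ^ k` with `k < n`
for a generator `g` of `⟨x⟩` chosen once for each cyclic subgroup. Since `g ^ k` generates `⟨g⟩`,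
`k` is coprime to `n`, so at most `∑ φ(n)` colours occur. If `x` and `y` are adjacent and of
the same order `n`, they lie in the cyclic group `⟨x, y⟩`, whose only subgroup of order `n`
forces `⟨x⟩ = ⟨y⟩`; then they share `g`, and equal colours would give `x = y`. -/

open Finset Subgroup

theorem SimpleGraph.chromaticNumber_le_card_of_forall_mem {V α : Type*} {Γ : SimpleGraph V}
    (c : V → α) (s : Finset α) (hs : ∀ v, c v ∈ s) (hc : ∀ ⦃u v⦄, Γ.Adj u v → c u ≠ c v) :
    Γ.chromaticNumber ≤ s.card := by
  let C : Γ.Coloring s :=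
    Coloring.mk (fun v => ⟨c v, hs v⟩) fun huv h => hc huv (congrArg Subtype.val h)
  simpa using C.colorable.chromaticNumber_le

section

variable {G : Type*} [Group G]

theorem IsCyclic.zpowers_eq_zpowers_of_orderOf_eq [Finite G] [IsCyclic G] {x y : G}
    (h : orderOf x = orderOf y) : zpowers x = zpowers y := by
  classical
  have : Fintype G := Fintype.ofFinite G
  -- at most `n` elements of a cyclic group solve `a ^ n = 1`, and `zpowers z` supplies `n`
  have hsolutions : ∀ z : G, (zpowers z : Set G) = {a | a ^ orderOf z = 1} := by
    intro z
    refine Set.eq_of_subset_of_ncard_le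
      (fun a ha => orderOf_dvd_iff_pow_eq_one.mp (orderOf_dvd_of_mem_zpowers ha)) ?_
      (Set.toFinite _)
    calc {a : G | a ^ orderOf z = 1}.ncard = #{a : G | a ^ orderOf z = 1} := by
          rw [Set.ncard_eq_toFinset_card', Set.toFinset_ofPred]
      _ ≤ orderOf z := IsCyclic.card_pow_eq_one_le (orderOf_pos z)
      _ = (zpowers z : Set G).ncard := by
          rw [← Nat.card_coe_set_eq, SetLike.coe_sort_coe, Nat.card_zpowers]
  apply SetLike.coe_injective
  rw [hsolutions x, hsolutions y, h]

theorem Subgroup.zpowers_eq_zpowers_of_orderOf_eq {H : Subgroup G} [Finite H] [IsCyclic H]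
    {x y : G} (hx : x ∈ H) (hy : y ∈ H) (h : orderOf x = orderOf y) : zpowers x = zpowers y := by
  have hH := IsCyclic.zpowers_eq_zpowers_of_orderOf_eq (x := (⟨x, hx⟩ : H)) (y := ⟨y, hy⟩)
    (by simpa only [Subgroup.orderOf_mk] using h)
  have hmap := congrArg (Subgroup.map H.subtype) hH
  rwa [MonoidHom.map_zpowers, MonoidHom.map_zpowers] at hmap

theorem IsOfFinOrder.coprime_of_orderOf_pow_eq {x : G} {k : ℕ} (hx : IsOfFinOrder x)
    (h : orderOf (x ^ k) = orderOf x) : (orderOf x).Coprime k := by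
  rw [hx.orderOf_pow, Nat.div_eq_self] at h
  exact h.resolve_left hx.orderOf_pos.ne'

noncomputable def zpowersGen (x : G) : G :=
  Function.invFun zpowers (zpowers x)

theorem zpowers_zpowersGen (x : G) : zpowers (zpowersGen x) = zpowers x :=
  Function.invFun_eq ⟨x, rfl⟩

theorem orderOf_zpowersGen (x : G) : orderOf (zpowersGen x) = orderOf x := by
  rw [← Nat.card_zpowers, zpowers_zpowersGen, Nat.card_zpowers]

theorem zpowersGen_eq_of_zpowers_eq {x y : G} (h : zpowers x = zpowers y) :
    zpowersGen x = zpowersGen y := by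
  rw [zpowersGen, h, zpowersGen]

section Finite

variable [Finite G]

noncomputable def zpowersLog (x : G) : ℕ :=
  (finEquivZPowers (isOfFinOrder_of_finite (zpowersGen x))).symm
    ⟨x, zpowers_zpowersGen x ▸ mem_zpowers x⟩

theorem zpowersGen_pow_zpowersLog (x : G) : zpowersGen x ^ zpowersLog x = x :=
  congrArg Subtype.val ((finEquivZPowers _).apply_symm_apply _)

theorem zpowersLog_lt (x : G) : zpowersLog x < orderOf x :=
  orderOf_zpowersGen x ▸ Fin.isLt _

theorem coprime_zpowersLog (x : G) : (orderOf x).Coprime (zpowersLog x) := by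
  have h := (isOfFinOrder_of_finite (zpowersGen x)).coprime_of_orderOf_pow_eq
    (k := zpowersLog x) (by rw [zpowersGen_pow_zpowersLog, orderOf_zpowersGen])
  rwa [orderOf_zpowersGen] at h

noncomputable def epowColor (x : G) : Σ _ : ℕ, ℕ :=
  ⟨orderOf x, zpowersLog x⟩

theorem epowColor_ne_of_adj {x y : G} (hxy : (epowGraph G).Adj x y) :
    epowColor x ≠ epowColor y := by
  obtain ⟨hne, hcyclic⟩ := hxy
  intro h
  obtain ⟨horder, hlog⟩ := Sigma.mk.inj_iff.mp h
  have hgen : zpowersGen x = zpowersGen y :=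
    zpowersGen_eq_of_zpowers_eq <| Subgroup.zpowers_eq_zpowers_of_orderOf_eq
      (subset_closure (Set.mem_insert x {y})) (subset_closure (Set.mem_insert_of_mem x rfl)) horder
  apply hne
  rw [← zpowersGen_pow_zpowersLog x, ← zpowersGen_pow_zpowersLog y, hgen, eq_of_heq hlog]

end Finite

theorem epowColor_mem [Fintype G] (x : G) :
    epowColor x ∈ (univ.image (orderOf : G → ℕ)).sigma fun n => {a ∈ range n | n.Coprime a} := by
  simp only [epowColor, mem_sigma, mem_image, mem_univ, true_and, exists_apply_eq_apply,
    mem_filter, mem_range]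
  exact ⟨zpowersLog_lt x, coprime_zpowersLog x⟩

end

/-- For a finite group `G` with `S` the set of element orders, the chromatic
number of the enhanced power graph is at most `∑_{n ∈ S} φ(n)`. -/
theorem chromaticNumber_epow_le_sum_totient (G : Type*) [Group G] [Fintype G] :
    (epowGraph G).chromaticNumber ≤
      ((∑ n ∈ Finset.image (fun x : G => orderOf x) Finset.univ, Nat.totient n : ℕ) : ℕ∞) := by
  calc (epowGraph G).chromaticNumber
      ≤ #((univ.image (orderOf : G → ℕ)).sigma fun n => {a ∈ range n | n.Coprime a}) :=
        chromaticNumber_le_card_of_forall_mem epowColor _ epowColor_mem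
          fun _ _ => epowColor_ne_of_adj
    _ = ∑ n ∈ univ.image (orderOf : G → ℕ), n.totient := by rw [card_sigma]; rfl
end

section
/- Every finite simple graph Γ is isomorphic to an induced subgraph of the commuting graph of some finite group G; moreover G can be taken to be nilpotent of nilpotency class at most 2 and of exponent dividing 4. (Concretely, for Γ on n vertices, one may take G to be the set V × F₂, where V is an n-dimensional vector space over the field F₂ with two elements and B is a suitable bilinear form on V, with multiplication (v₁,a₁)∘(v₂,a₂) = (v₁+v₂, a₁+a₂+B(v₁,v₂)); then (v₁,a₁) and (v₂,a₂) commute if and only if B(v₁,v₂) = B(v₂,v₁).) -/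
open SimpleGraph

/-- `G` is nilpotent of nilpotency class at most 2. -/
def IsNilpotentOfClassLeTwo (G : Type*) [Group G] : Prop :=
  ∃ h : Group.IsNilpotent G, @Group.nilpotencyClass G _ ≤ 2

/-- The exponent of `G` divides 4. -/
def ExponentDvdFour (G : Type*) [Group G] : Prop :=
  Monoid.exponent G ∣ 4

/-!
For a biadditive map `B : A → A → C` of abelian groups, the set `A × C` with the product
`(a, c) * (a', c') = (a + a', c + c' + B a a')` is a group in which `(a, c)` and `(a', c')` commute
iff `B a a' = B a' a`. Commutators have trivial `A`-component and such elements are central, so the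
group has class at most 2; if `A` and `C` have exponent 2 then every square has trivial
`A`-component, so the exponent divides 4. Given a graph on a finite ordered vertex set, take
`A = (ZMod 2)^V`, `C = ZMod 2`, and `B (e x) (e y) = 1` iff `x < y` and `x, y` are not adjacent:
then the elements `(e x, 0)` commute exactly along the edges.
-/

@[ext]
structure BilinExt {A C : Type*} [AddCommGroup A] [AddCommGroup C] (B : A →+ A →+ C) where
  fst : A
  snd : C

namespace BilinExt

variable {A C : Type*} [AddCommGroup A] [AddCommGroup C] {B : A →+ A →+ C}

instance : Group (BilinExt B) where
  mul g h := ⟨g.fst + h.fst, g.snd + h.snd + B g.fst h.fst⟩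
  one := ⟨0, 0⟩
  inv g := ⟨-g.fst, -g.snd + B g.fst g.fst⟩
  mul_assoc g h k := by
    ext
    · exact add_assoc _ _ _
    · change g.snd + h.snd + B g.fst h.fst + k.snd + B (g.fst + h.fst) k.fst
        = g.snd + (h.snd + k.snd + B h.fst k.fst) + B g.fst (h.fst + k.fst)
      simp only [map_add, AddMonoidHom.add_apply]
      abel
  one_mul g := by
    ext
    · exact zero_add _
    · change 0 + g.snd + B 0 g.fst = g.snd
      simp
  mul_one g := by
    ext
    · exact add_zero _
    · change g.snd + 0 + B g.fst 0 = g.snd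
      simp
  inv_mul_cancel g := by
    ext
    · exact neg_add_cancel _
    · change -g.snd + B g.fst g.fst + g.snd + B (-g.fst) g.fst = 0
      simp only [map_neg, AddMonoidHom.neg_apply]
      abel

@[simp] theorem fst_mul (g h : BilinExt B) : (g * h).fst = g.fst + h.fst := rfl
@[simp] theorem snd_mul (g h : BilinExt B) : (g * h).snd = g.snd + h.snd + B g.fst h.fst := rfl
@[simp] theorem fst_one : (1 : BilinExt B).fst = 0 := rfl
@[simp] theorem snd_one : (1 : BilinExt B).snd = 0 := rfl
@[simp] theorem fst_inv (g : BilinExt B) : g⁻¹.fst = -g.fst := rfl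

def equivProd : BilinExt B ≃ A × C where
  toFun g := (g.fst, g.snd)
  invFun p := ⟨p.1, p.2⟩

instance [Fintype A] [Fintype C] : Fintype (BilinExt B) := Fintype.ofEquiv _ equivProd.symm

theorem commute_iff {g h : BilinExt B} : Commute g h ↔ B g.fst h.fst = B h.fst g.fst := by
  rw [Commute, SemiconjBy, BilinExt.ext_iff]
  simp only [fst_mul, snd_mul, add_comm g.fst, add_comm g.snd, add_right_inj, and_iff_right]

theorem mem_center_of_fst_eq_zero {g : BilinExt B} (hg : g.fst = 0) :
    g ∈ Subgroup.center (BilinExt B) :=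
  Subgroup.mem_center_iff.mpr fun h => (commute_iff.mpr (by simp [hg])).symm

theorem commutator_le_center : commutator (BilinExt B) ≤ Subgroup.center (BilinExt B) := by
  rw [commutator_def, Subgroup.commutator_le]
  refine fun g _ h _ => mem_center_of_fst_eq_zero ?_
  simp only [commutatorElement_def, fst_mul, fst_inv]
  abel

theorem sq_eq_mk (g : BilinExt B) : g ^ 2 = ⟨2 • g.fst, 2 • g.snd + B g.fst g.fst⟩ := by
  ext <;> simp [sq, two_nsmul]

theorem pow_four_eq_one (hA : ∀ a : A, 2 • a = 0) (hC : ∀ c : C, 2 • c = 0) (g : BilinExt B) :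
    g ^ 4 = 1 := by
  rw [show 4 = 2 * 2 from rfl, pow_mul, sq_eq_mk, sq_eq_mk]
  ext <;> simp [hA, hC]

end BilinExt

theorem isNilpotentOfClassLeTwo_of_commutator_le_center (G : Type*) [Group G]
    (h : commutator G ≤ Subgroup.center G) : IsNilpotentOfClassLeTwo G := by
  have hbot : (⊤ : Subgroup G).lowerCentralSeries 2 = ⊥ :=
    Subgroup.lowerCentralSeries_succ_eq_bot ⊤ (by rwa [Subgroup.top_lowerCentralSeries_one])
  have := Subgroup.nilpotent_iff_lowerCentralSeries.mpr ⟨2, hbot⟩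
  exact ⟨this, Subgroup.lowerCentralSeries_eq_bot_iff_nilpotencyClass_le.mp hbot⟩

theorem Pi.single_left_injective {ι M : Type*} [DecidableEq ι] [Zero M] {b : M} (hb : b ≠ 0) :
    Function.Injective fun i : ι => Pi.single i b :=
  fun i j h => by simpa [Pi.single_apply, hb, eq_comm] using congrFun h j

section GraphForm

variable {V : Type*} [Fintype V] [LinearOrder V] (Γ : SimpleGraph V) [DecidableRel Γ.Adj]

noncomputable def graphForm : (V → ZMod 2) →+ (V → ZMod 2) →+ ZMod 2 :=
  LinearMap.toAddMonoidHom'.comp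
    (Matrix.toBilin' fun x y => if x < y ∧ ¬Γ.Adj x y then 1 else 0).toAddMonoidHom

theorem graphForm_single (x y : V) :
    graphForm Γ (Pi.single x 1) (Pi.single y 1) = if x < y ∧ ¬Γ.Adj x y then 1 else 0 :=
  Matrix.toBilin'_single _ x y

variable {Γ} in
theorem commute_single_iff {x y : V} (hxy : x ≠ y) :
    Commute (⟨Pi.single x 1, 0⟩ : BilinExt (graphForm Γ)) ⟨Pi.single y 1, 0⟩ ↔ Γ.Adj x y := by
  wlog hlt : x < y generalizing x y
  · rw [Commute.symm_iff, Γ.adj_comm]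
    exact this hxy.symm (lt_of_le_of_ne (not_lt.mp hlt) hxy.symm)
  simp [BilinExt.commute_iff, graphForm_single, hlt, not_lt.mpr hlt.le]

noncomputable def graphEmbedding : Γ ↪g comGraph (BilinExt (graphForm Γ)) where
  toFun x := ⟨Pi.single x 1, 0⟩
  inj' _ _ h := Pi.single_left_injective one_ne_zero (congrArg BilinExt.fst h)
  map_rel_iff' {x y} := by
    change _ ≠ _ ∧ _ ↔ _
    rcases eq_or_ne x y with rfl | hxy
    · exact iff_of_false (fun h => h.1 rfl) Γ.irrefl
    · refine (and_iff_right fun h => hxy ?_).trans (commute_single_iff hxy)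
      exact Pi.single_left_injective one_ne_zero (congrArg BilinExt.fst h)

end GraphForm

/-- Every finite simple graph is an induced subgraph of the commuting graph of
some finite group, which may be taken nilpotent of class at most 2 and of exponent dividing 4. -/
theorem graph_embeds_in_comGraph (V : Type) [Fintype V] (Γ : SimpleGraph V) :
    ∃ (G : Type) (instG : Group G) (_ : Fintype G),
      @IsNilpotentOfClassLeTwo G instG ∧ @ExponentDvdFour G instG ∧
      Nonempty (Γ ↪g @comGraph G instG) := by
  classical
  let : LinearOrder V := LinearOrder.lift' _ (Fintype.equivFin V).injective
  exact ⟨BilinExt (graphForm Γ), inferInstance, inferInstance,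
    isNilpotentOfClassLeTwo_of_commutator_le_center _ BilinExt.commutator_le_center,
    Monoid.exponent_dvd_of_forall_pow_eq_one
      (BilinExt.pow_four_eq_one (fun a => funext fun x => CharTwo.two_nsmul (a x))
        CharTwo.two_nsmul),
    ⟨graphEmbedding Γ⟩⟩
end

section
/- Every finite simple graph is isomorphic to an induced subgraph of the enhanced power graph of some finite abelian group. -/
/-!
Choose distinct primes `p_v`, one for each vertex, and let `G = ∏_v C_{p_v} × C_{p_v}`. In
`C_p × C_p` the pair `a = (g, 1)`, `b = (1, g)` generates a non-cyclic subgroup, while any two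
elements of `⟨b⟩` generate a cyclic one. Label `v` by the element whose `w`-coordinate is `a` if
`w = v`, `1` if `w` is a neighbour of `v`, and `b` otherwise. Since the factors have coprime
orders, two elements of `G` generate a cyclic subgroup iff every pair of coordinates does, and for
distinct `u`, `v` the only coordinates that can fail are `u` and `v`, where the pair is `{a, 1}` or
`{a, b}` according as `u` and `v` are adjacent or not.
-/

open SimpleGraph

open Subgroup

theorem isCyclic_closure_pair_of_mem_zpowers {G : Type*} [Group G] {x y z : G}
    (hx : x ∈ zpowers z) (hy : y ∈ zpowers z) : IsCyclic (closure ({x, y} : Set G)) :=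
  isCyclic_of_le (closure_le _ |>.2 <| by rintro w (rfl | rfl) <;> assumption)

theorem isCyclic_closure_pair_map {G G' : Type*} [Group G] [Group G'] (f : G →* G') {x y : G}
    (h : IsCyclic (closure ({x, y} : Set G))) : IsCyclic (closure ({f x, f y} : Set G')) := by
  rw [← Set.image_pair, ← MonoidHom.map_closure]
  exact isCyclic_of_surjective _ (f.subgroupMap_surjective _)

theorem isCyclic_pi {ι : Type*} [Fintype ι] {M : ι → Type*} [∀ i, CommGroup (M i)]
    [∀ i, Finite (M i)] [∀ i, IsCyclic (M i)]
    (hM : Pairwise fun i j => (Nat.card (M i)).Coprime (Nat.card (M j))) :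
    IsCyclic (∀ i, M i) := by
  refine IsCyclic.of_exponent_eq_card ?_
  rw [Monoid.exponent_pi, Nat.card_pi]
  simp only [IsCyclic.exponent_eq_card]
  exact Finset.lcm_eq_prod fun i _ j _ hij => hM hij

theorem isCyclic_closure_pair_pi_iff {ι : Type*} [Fintype ι] {M : ι → Type*}
    [∀ i, CommGroup (M i)] [∀ i, Finite (M i)]
    (hM : Pairwise fun i j => (Nat.card (M i)).Coprime (Nat.card (M j))) {x y : ∀ i, M i} :
    IsCyclic (closure ({x, y} : Set (∀ i, M i))) ↔
      ∀ i, IsCyclic (closure ({x i, y i} : Set (M i))) := by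
  refine ⟨fun h i => isCyclic_closure_pair_map (Pi.evalMonoidHom M i) h, fun h => ?_⟩
  let H i := closure ({x i, y i} : Set (M i))
  have hH : Pairwise fun i j => (Nat.card (H i)).Coprime (Nat.card (H j)) := fun i j hij =>
    ((hM hij).coprime_dvd_left (card_subgroup_dvd_card _)).coprime_dvd_right
      (card_subgroup_dvd_card _)
  have := isCyclic_pi hH
  -- `⟨x, y⟩` lies in the image of the cyclic group `∏ i, ⟨x i, y i⟩`.
  let φ := MonoidHom.piMap fun i => (H i).subtype
  have : IsCyclic φ.range := isCyclic_of_surjective _ φ.rangeRestrict_surjective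
  refine isCyclic_of_le (H' := φ.range) (closure_le _ |>.2 ?_)
  rintro w (rfl | rfl) <;> exact ⟨fun i => ⟨w i, subset_closure (by simp)⟩, rfl⟩

theorem not_isCyclic_closure_pair_inl_inr {M : Type*} [Group M] {g : M} (hg : g ≠ 1) :
    ¬IsCyclic (closure ({(g, 1), (1, g)} : Set (M × M))) := by
  intro h
  have hle : (zpowers g).prod (zpowers g) ≤ closure ({(g, 1), (1, g)} : Set (M × M)) := by
    rintro ⟨_, _⟩ ⟨⟨m, rfl⟩, ⟨n, rfl⟩⟩
    have : ((g ^ m, g ^ n) : M × M) = (g, 1) ^ m * (1, g) ^ n := by simp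
    rw [this]
    exact mul_mem (zpow_mem (subset_closure (by simp)) _) (zpow_mem (subset_closure (by simp)) _)
  have := isCyclic_of_le hle
  rw [(prodEquiv _ _).isCyclic, Group.isCyclic_prod_iff, Nat.coprime_self, Nat.card_zpowers,
    orderOf_eq_one_iff] at this
  exact hg this.2.2

theorem exists_injective_prime (α : Type*) [Finite α] :
    ∃ p : α → ℕ, (∀ i, (p i).Prime) ∧ Function.Injective p :=
  ⟨fun i => Nat.nth Nat.Prime (Finite.equivFin α i), fun _ => Nat.prime_nth_prime _,
    fun _ _ h => (Finite.equivFin α).injective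
      (Fin.val_injective (Nat.nth_injective Nat.infinite_setOfPred_prime h))⟩

namespace SimpleGraph

variable {V : Type*} [DecidableEq V] (Γ : SimpleGraph V) [DecidableRel Γ.Adj] {H : V → Type*}

section Group

variable [∀ v, Group (H v)] {a b : ∀ v, H v}

def epowLabel (a b : ∀ v, H v) (v : V) : ∀ w, H w :=
  fun w => if w = v then a w else if Γ.Adj v w then 1 else b w

theorem epowLabel_self (v : V) : Γ.epowLabel a b v v = a v :=
  if_pos rfl

theorem epowLabel_of_ne {v w : V} (hwv : w ≠ v) :
    Γ.epowLabel a b v w = if Γ.Adj v w then 1 else b w :=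
  if_neg hwv

theorem epowLabel_mem_zpowers {v w : V} (hwv : w ≠ v) :
    Γ.epowLabel a b v w ∈ zpowers (b w) := by
  rw [Γ.epowLabel_of_ne hwv]
  split_ifs
  exacts [one_mem _, mem_zpowers _]

theorem isCyclic_closure_epowLabel_iff {u v : V} (huv : u ≠ v)
    (hab : ¬IsCyclic (closure ({a u, b u} : Set (H u)))) :
    IsCyclic (closure ({Γ.epowLabel a b u u, Γ.epowLabel a b v u} : Set (H u))) ↔
      Γ.Adj u v := by
  rw [Γ.epowLabel_self, Γ.epowLabel_of_ne huv]
  by_cases h : Γ.Adj v u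
  · rw [if_pos h]
    exact iff_of_true (isCyclic_closure_pair_of_mem_zpowers (mem_zpowers _) (one_mem _)) h.symm
  · rw [if_neg h]
    exact iff_of_false hab (mt Adj.symm h)

theorem epowLabel_injective (hab : ∀ v, ¬IsCyclic (closure ({a v, b v} : Set (H v)))) :
    Function.Injective (Γ.epowLabel a b) := by
  intro u v h
  by_contra huv
  have hvu : Γ.epowLabel a b v u ∈ zpowers (b u) := Γ.epowLabel_mem_zpowers huv
  rw [← h, Γ.epowLabel_self] at hvu
  exact hab u (isCyclic_closure_pair_of_mem_zpowers hvu (mem_zpowers _))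

theorem forall_isCyclic_closure_epowLabel_iff {u v : V} (huv : u ≠ v)
    (hab : ∀ v, ¬IsCyclic (closure ({a v, b v} : Set (H v)))) :
    (∀ w, IsCyclic (closure ({Γ.epowLabel a b u w, Γ.epowLabel a b v w} : Set (H w)))) ↔
      Γ.Adj u v := by
  refine ⟨fun h => (Γ.isCyclic_closure_epowLabel_iff huv (hab u)).1 (h u), fun h w => ?_⟩
  by_cases hwu : w = u
  · subst hwu
    exact (Γ.isCyclic_closure_epowLabel_iff huv (hab w)).2 h
  by_cases hwv : w = v
  · subst hwv
    rw [Set.pair_comm]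
    exact (Γ.isCyclic_closure_epowLabel_iff (Ne.symm huv) (hab w)).2 h.symm
  exact isCyclic_closure_pair_of_mem_zpowers (Γ.epowLabel_mem_zpowers hwu)
    (Γ.epowLabel_mem_zpowers hwv)

end Group

variable [Fintype V] [∀ v, CommGroup (H v)] [∀ v, Finite (H v)]

def epowLabelEmbedding (hH : Pairwise fun v w => (Nat.card (H v)).Coprime (Nat.card (H w)))
    {a b : ∀ v, H v} (hab : ∀ v, ¬IsCyclic (closure ({a v, b v} : Set (H v)))) :
    Γ ↪g epowGraph (∀ v, H v) where
  toFun := Γ.epowLabel a b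
  inj' := Γ.epowLabel_injective hab
  map_rel_iff' {u v} := by
    change Γ.epowLabel a b u ≠ Γ.epowLabel a b v ∧
      IsCyclic (closure {Γ.epowLabel a b u, Γ.epowLabel a b v}) ↔ Γ.Adj u v
    by_cases huv : u = v
    · subst huv
      simp
    rw [isCyclic_closure_pair_pi_iff hH, Γ.forall_isCyclic_closure_epowLabel_iff huv hab]
    exact and_iff_right ((Γ.epowLabel_injective hab).ne huv)

end SimpleGraph

/-- Every finite simple graph is an induced subgraph of the enhanced power graph
of some finite abelian group. -/
theorem graph_embeds_in_epowGraph (V : Type) [Fintype V] (Γ : SimpleGraph V) :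
    ∃ (G : Type) (instG : CommGroup G) (_ : Fintype G),
      Nonempty (Γ ↪g @epowGraph G instG.toGroup) := by
  classical
  obtain ⟨p, hp, hpinj⟩ := exists_injective_prime V
  have := fun v => Fact.mk (hp v)
  let M v := Multiplicative (ZMod (p v))
  have hcard : Pairwise fun v w => (Nat.card (M v × M v)).Coprime (Nat.card (M w × M w)) := by
    intro v w hvw
    have := (Nat.coprime_primes (hp v) (hp w)).2 (hpinj.ne hvw)
    simpa [M] using (this.mul_left this).mul_right (this.mul_left this)
  exact ⟨∀ v, M v × M v, inferInstance, inferInstance, ⟨Γ.epowLabelEmbedding hcard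
    (a := fun _ => (.ofAdd 1, 1)) (b := fun _ => (1, .ofAdd 1))
    fun _ => not_isCyclic_closure_pair_inl_inr (ofAdd_eq_one.not.2 one_ne_zero)⟩⟩
end

section
/- Let G be a nontrivial finite group with trivial centre, Z(G) = {1}. Then the induced subgraph of the commuting graph of G on the set G \ {1} of non-identity elements is connected if and only if the Gruenberg–Kegel graph of G is connected. -/
/-!
Commuting elements `x`, `y` with primes `p ∣ orderOf x`, `q ∣ orderOf y` yield an element of order
`p * q` (for `p ≠ q`), so sending `x ≠ 1` to the least prime divisor of its order maps commuting
paths onto Gruenberg–Kegel paths, and Cauchy's theorem makes this map surjective.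

Conversely, fix `x₀ ≠ 1`. Non-identity elements of a `q`-group are linked through its nontrivial
centre, and all Sylow `q`-subgroups are conjugate; hence an edge `q — r` of the Gruenberg–Kegel
graph lets the component of `x₀` pass from elements of order `q` to elements of order `r`, and by
connectedness it contains elements of every prime order. The stabiliser of that component under
conjugation then contains a Sylow subgroup for every prime, so it is all of `G`; therefore the
component contains every element of prime order, and with it every `x ≠ 1`, which is linked to
its prime-order powers.
-/

open SimpleGraph

/-- The Gruenberg–Kegel (prime) graph of a finite group `G`: vertices are the primes dividing
`|G|`, with distinct `p`, `q` adjacent iff `G` has an element of order `p * q`. -/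
def gkGraph (G : Type*) [Group G] : SimpleGraph {p : ℕ // p.Prime ∧ p ∣ Nat.card G} where
  Adj p q := p ≠ q ∧ ∃ x : G, orderOf x = p.1 * q.1
  symm := by
    constructor
    intro p q h
    refine ⟨h.1.symm, ?_⟩
    rw [mul_comm]
    exact h.2
  loopless := ⟨fun _ h => h.1 rfl⟩

namespace SimpleGraph

variable {V W : Type*} {Γ : SimpleGraph V} {Δ : SimpleGraph W}

theorem Connected.of_surjective_of_adj_reachable (hΓ : Γ.Connected) {f : V → W}
    (hf : Function.Surjective f) (hadj : ∀ a b, Γ.Adj a b → Δ.Reachable (f a) (f b)) :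
    Δ.Connected := by
  refine (connected_iff _).mpr ⟨fun w w' => ?_, hΓ.nonempty.map f⟩
  obtain ⟨⟨v, rfl⟩, ⟨v', rfl⟩⟩ := And.intro (hf w) (hf w')
  rw [reachable_iff_reflTransGen]
  exact Relation.ReflTransGen.lift' f (fun a b hab => (reachable_iff_reflTransGen _ _).mp
    (hadj a b hab)) v v' ((reachable_iff_reflTransGen _ _).mp (hΓ.preconnected v v'))

theorem Connected.induction_on_adj (hΓ : Γ.Connected) {P : V → Prop} {v : V} (hv : P v)
    (hadj : ∀ a b, Γ.Adj a b → P a → P b) (w : V) : P w := by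
  induction (reachable_iff_reflTransGen _ _).mp (hΓ.preconnected v w) with
  | refl => exact hv
  | tail _ hab ih => exact hadj _ _ hab ih

end SimpleGraph

section

variable {G : Type*} [Group G]

theorem gkGraph_reachable_of_commute [Finite G] {x y : G} (hxy : Commute x y)
    {p q : {p : ℕ // p.Prime ∧ p ∣ Nat.card G}} (hp : p.1 ∣ orderOf x) (hq : q.1 ∣ orderOf y) :
    (gkGraph G).Reachable p q := by
  rcases eq_or_ne p q with rfl | hpq
  · rfl
  have hx : orderOf (x ^ (orderOf x / p.1)) = p.1 := orderOf_pow_orderOf_div (orderOf_pos x).ne' hp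
  have hy : orderOf (y ^ (orderOf y / q.1)) = q.1 := orderOf_pow_orderOf_div (orderOf_pos y).ne' hq
  have hcop : (orderOf (x ^ (orderOf x / p.1))).Coprime (orderOf (y ^ (orderOf y / q.1))) := by
    rw [hx, hy]
    exact (Nat.coprime_primes p.2.1 q.2.1).mpr (Subtype.coe_ne_coe.mpr hpq)
  refine Adj.reachable ⟨hpq, x ^ (orderOf x / p.1) * y ^ (orderOf y / q.1), ?_⟩
  rw [(hxy.pow_pow _ _).orderOf_mul_eq_mul_orderOf_of_coprime hcop, hx, hy]

noncomputable def minPrimeOfOrder (x : {x : G | x ≠ 1}) : {p : ℕ // p.Prime ∧ p ∣ Nat.card G} :=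
  ⟨(orderOf x.1).minFac, Nat.minFac_prime (mt orderOf_eq_one_iff.mp x.2),
    (Nat.minFac_dvd _).trans (orderOf_dvd_natCard _)⟩

theorem minPrimeOfOrder_surjective [Finite G] :
    Function.Surjective (minPrimeOfOrder (G := G)) := by
  rintro ⟨p, hp, hpG⟩
  have : Fact p.Prime := ⟨hp⟩
  obtain ⟨x, hx⟩ := exists_prime_orderOf_dvd_card' p hpG
  exact ⟨⟨x, (orderOf_eq_prime_iff.mp hx).2⟩,
    Subtype.ext ((congrArg Nat.minFac hx).trans hp.minFac_eq)⟩

theorem gkGraph_connected_of_reduced_comGraph_connected [Finite G]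
    (h : ((comGraph G).induce {x : G | x ≠ 1}).Connected) : (gkGraph G).Connected :=
  h.of_surjective_of_adj_reachable minPrimeOfOrder_surjective fun _ _ hab =>
    gkGraph_reachable_of_commute hab.2 (Nat.minFac_dvd _) (Nat.minFac_dvd _)

end

section

variable {G : Type*} [Group G]

def ComLinked (x y : G) : Prop :=
  ∃ (hx : x ≠ 1) (hy : y ≠ 1), ((comGraph G).induce {z : G | z ≠ 1}).Reachable ⟨x, hx⟩ ⟨y, hy⟩

namespace ComLinked

variable {x y z : G}

theorem refl (hx : x ≠ 1) : ComLinked x x := ⟨hx, hx, .rfl⟩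

theorem symm (h : ComLinked x y) : ComLinked y x := ⟨h.2.1, h.1, h.2.2.symm⟩

theorem trans (h : ComLinked x y) (h' : ComLinked y z) : ComLinked x z :=
  ⟨h.1, h'.2.1, h.2.2.trans h'.2.2⟩

theorem ne_one_right (h : ComLinked x y) : y ≠ 1 := h.2.1

theorem of_commute (hx : x ≠ 1) (hy : y ≠ 1) (h : Commute x y) : ComLinked x y := by
  rcases eq_or_ne x y with rfl | hxy
  · exact refl hx
  · exact ⟨hx, hy, Adj.reachable ⟨hxy, h⟩⟩

theorem map (h : ComLinked x y) (φ : G ≃* G) : ComLinked (φ x) (φ y) := by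
  obtain ⟨hx, hy, hxy⟩ := h
  let φΓ : (comGraph G).induce {z : G | z ≠ 1} →g (comGraph G).induce {z : G | z ≠ 1} :=
    { toFun := fun v => ⟨φ v, (map_ne_one_iff φ φ.injective).mpr v.2⟩
      map_rel' := fun ⟨hne, hc⟩ => ⟨φ.injective.ne hne, hc.map φ⟩ }
  exact ⟨_, _, hxy.map φΓ⟩

end ComLinked

theorem comLinked_of_mem_of_isPGroup [Finite G] {p : ℕ} [Fact p.Prime] {P : Subgroup G}
    (hP : IsPGroup p P) {x y : G} (hx : x ∈ P) (hy : y ∈ P) (hx1 : x ≠ 1) (hy1 : y ≠ 1) :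
    ComLinked x y := by
  have : Nontrivial P := ⟨⟨⟨x, hx⟩, 1, fun h => hx1 (congrArg Subtype.val h)⟩⟩
  have := hP.center_nontrivial
  obtain ⟨z, hz⟩ := exists_ne (1 : Subgroup.center P)
  have hz1 : ((z : P) : G) ≠ 1 := fun h => hz (Subtype.ext (Subtype.ext h))
  have hcomm (w : P) : Commute (w : G) ((z : P) : G) :=
    congrArg Subtype.val (Subgroup.mem_center_iff.mp z.2 w)
  exact (ComLinked.of_commute hx1 hz1 (hcomm ⟨x, hx⟩)).trans
    (ComLinked.of_commute hz1 hy1 (hcomm ⟨y, hy⟩).symm)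

theorem comLinked_pow_orderOf_div [Finite G] {x : G} (hx : x ≠ 1) {q : ℕ} (hq : q.Prime)
    (hqx : q ∣ orderOf x) : ComLinked x (x ^ (orderOf x / q)) := by
  refine ComLinked.of_commute hx ?_ (Commute.self_pow x _)
  rw [ne_eq, ← orderOf_eq_one_iff, orderOf_pow_orderOf_div (orderOf_pos x).ne' hqx]
  exact hq.one_lt.ne'

theorem exists_sylow_mem_of_orderOf_eq_prime {q : ℕ} [Fact q.Prime] {u : G}
    (hu : orderOf u = q) : ∃ S : Sylow q G, u ∈ S := by
  have : IsPGroup q (Subgroup.zpowers u) := IsPGroup.of_card (by rw [Nat.card_zpowers, hu, pow_one])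
  obtain ⟨S, hS⟩ := this.exists_le_sylow
  exact ⟨S, hS (Subgroup.mem_zpowers u)⟩

theorem exists_comLinked_conj_of_orderOf_eq_prime [Finite G] {q : ℕ} (hq : q.Prime) {u v : G}
    (hu : orderOf u = q) (hv : orderOf v = q) : ∃ g : G, ComLinked u (MulAut.conj g v) := by
  have : Fact q.Prime := ⟨hq⟩
  obtain ⟨S, huS⟩ := exists_sylow_mem_of_orderOf_eq_prime hu
  obtain ⟨T, hvT⟩ := exists_sylow_mem_of_orderOf_eq_prime hv
  obtain ⟨g, rfl⟩ := MulAction.exists_smul_eq G T S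
  have hvS : MulAut.conj g v ∈ ((g • T : Sylow q G) : Subgroup G) := by
    rw [Sylow.coe_subgroup_smul]
    exact Subgroup.smul_mem_pointwise_smul v (MulAut.conj g) T hvT
  refine ⟨g, comLinked_of_mem_of_isPGroup (g • T).isPGroup' huS hvS
    (orderOf_eq_prime_iff.mp hu).2 ((orderOf_eq_prime_iff (p := q)).mp ?_).2⟩
  rw [MulEquiv.orderOf_eq, hv]

def comLinkedStabilizer (x₀ : G) (hx₀ : x₀ ≠ 1) : Subgroup G where
  carrier := {g | ComLinked x₀ (MulAut.conj g x₀)}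
  one_mem' := by simpa using ComLinked.refl hx₀
  mul_mem' {a b} ha hb := by
    rw [Set.mem_ofPred_eq, map_mul, MulAut.mul_apply]
    exact ha.trans (hb.map (MulAut.conj a))
  inv_mem' {a} ha := by
    simpa [mul_assoc] using (ha.map (MulAut.conj a⁻¹)).symm

variable {x₀ : G} {hx₀ : x₀ ≠ 1}

theorem ComLinked.of_conj {g y : G} (hg : g ∈ comLinkedStabilizer x₀ hx₀)
    (h : ComLinked x₀ (MulAut.conj g y)) : ComLinked x₀ y := by
  have hg' : ComLinked x₀ (MulAut.conj g⁻¹ x₀) := inv_mem hg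
  simpa [mul_assoc] using hg'.trans (h.map (MulAut.conj g⁻¹))

theorem sylow_le_comLinkedStabilizer [Finite G] {q : ℕ} [Fact q.Prime] {S : Sylow q G} {u : G}
    (hu : ComLinked x₀ u) (huS : u ∈ S) : (S : Subgroup G) ≤ comLinkedStabilizer x₀ hx₀ := by
  intro s hs
  have hsuS : MulAut.conj s u ∈ S := by
    rw [MulAut.conj_apply]
    exact mul_mem (mul_mem hs huS) (inv_mem hs)
  have hsu1 : MulAut.conj s u ≠ 1 :=
    (map_ne_one_iff _ (MulAut.conj s).injective).mpr hu.ne_one_right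
  exact (hu.trans (comLinked_of_mem_of_isPGroup S.isPGroup' huS hsuS hu.ne_one_right hsu1)).trans
    (hu.symm.map (MulAut.conj s))

theorem comLinkedStabilizer_eq_top [Finite G]
    (h : ∀ q : ℕ, q.Prime → q ∣ Nat.card G → ∃ u : G, orderOf u = q ∧ ComLinked x₀ u) :
    comLinkedStabilizer x₀ hx₀ = ⊤ := by
  rw [← Subgroup.index_eq_one]
  by_contra hne
  obtain ⟨q, hq, hqi⟩ := Nat.exists_prime_and_dvd hne
  have : Fact q.Prime := ⟨hq⟩
  obtain ⟨u, hu, hxu⟩ := h q hq (hqi.trans (Subgroup.index_dvd_card _))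
  obtain ⟨S, huS⟩ := exists_sylow_mem_of_orderOf_eq_prime hu
  exact S.not_dvd_index
    (hqi.trans (Subgroup.index_dvd_of_le (sylow_le_comLinkedStabilizer hxu huS)))

end

section

variable {G : Type*} [Group G] [Finite G]

/-- Some conjugate of `z ^ r` lies in a Sylow `q`-subgroup containing `u`, hence is linked to `u`
through its centre, and it commutes with the same conjugate of `z ^ q`, of order `r`. -/
theorem ComLinked.exists_orderOf_eq_of_orderOf_eq_mul {x₀ u z : G} {q r : ℕ} (hq : q.Prime)
    (hr : r.Prime) (hxu : ComLinked x₀ u) (hu : orderOf u = q) (hz : orderOf z = q * r) :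
    ∃ v : G, orderOf v = r ∧ ComLinked x₀ v := by
  have ha : orderOf (z ^ (orderOf z / q)) = q :=
    orderOf_pow_orderOf_div (orderOf_pos z).ne' (Dvd.intro r hz.symm)
  have hb : orderOf (z ^ (orderOf z / r)) = r :=
    orderOf_pow_orderOf_div (orderOf_pos z).ne' (Dvd.intro_left q hz.symm)
  have hab : ComLinked (z ^ (orderOf z / q)) (z ^ (orderOf z / r)) :=
    .of_commute (orderOf_eq_prime_iff (hp := ⟨hq⟩) |>.mp ha).2
      (orderOf_eq_prime_iff (hp := ⟨hr⟩) |>.mp hb).2 ((Commute.refl z).pow_pow _ _)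
  obtain ⟨g, hug⟩ := exists_comLinked_conj_of_orderOf_eq_prime hq hu ha
  exact ⟨_, by rw [MulEquiv.orderOf_eq, hb], (hxu.trans hug).trans (hab.map (MulAut.conj g))⟩

theorem exists_comLinked_of_gkGraph_connected (hGK : (gkGraph G).Connected) {x₀ : G}
    (hx₀ : x₀ ≠ 1) (q : {p : ℕ // p.Prime ∧ p ∣ Nat.card G}) :
    ∃ u : G, orderOf u = q.1 ∧ ComLinked x₀ u := by
  refine hGK.induction_on_adj (P := fun q => ∃ u : G, orderOf u = q.1 ∧ ComLinked x₀ u)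
    (v := minPrimeOfOrder ⟨x₀, hx₀⟩) ?_ ?_ q
  · exact ⟨_, orderOf_pow_orderOf_div (orderOf_pos x₀).ne' (Nat.minFac_dvd _),
      comLinked_pow_orderOf_div hx₀ (minPrimeOfOrder ⟨x₀, hx₀⟩).2.1 (Nat.minFac_dvd _)⟩
  · rintro q r ⟨-, z, hz⟩ ⟨u, hu, hxu⟩
    exact hxu.exists_orderOf_eq_of_orderOf_eq_mul q.2.1 r.2.1 hu hz

theorem comLinked_of_gkGraph_connected (hGK : (gkGraph G).Connected) {x₀ c : G}
    (hx₀ : x₀ ≠ 1) (hc : c ≠ 1) : ComLinked x₀ c := by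
  have hreach q hq hqG := exists_comLinked_of_gkGraph_connected hGK hx₀ ⟨q, hq, hqG⟩
  set r := minPrimeOfOrder ⟨c, hc⟩
  have hcu : ComLinked c (c ^ (orderOf c / r.1)) :=
    comLinked_pow_orderOf_div hc r.2.1 (Nat.minFac_dvd _)
  obtain ⟨u, hu, hxu⟩ := hreach r.1 r.2.1 r.2.2
  obtain ⟨g, hug⟩ := exists_comLinked_conj_of_orderOf_eq_prime r.2.1 hu
    (orderOf_pow_orderOf_div (orderOf_pos c).ne' (Nat.minFac_dvd _))
  have hg : g ∈ comLinkedStabilizer x₀ hx₀ := by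
    rw [comLinkedStabilizer_eq_top hreach]
    exact Subgroup.mem_top g
  exact (ComLinked.of_conj hg (hxu.trans hug)).trans hcu.symm

theorem reduced_comGraph_connected_of_gkGraph_connected (hGK : (gkGraph G).Connected) :
    ((comGraph G).induce {x : G | x ≠ 1}).Connected := by
  obtain ⟨⟨p, hp, hpG⟩⟩ := hGK.nonempty
  have : Fact p.Prime := ⟨hp⟩
  obtain ⟨x₀, hx₀⟩ := exists_prime_orderOf_dvd_card' p hpG
  have hx₀1 : x₀ ≠ 1 := (orderOf_eq_prime_iff.mp hx₀).2
  refine (connected_iff _).mpr ⟨fun a b => ?_, ⟨⟨x₀, hx₀1⟩⟩⟩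
  exact ((comLinked_of_gkGraph_connected hGK hx₀1 a.2).symm.trans
    (comLinked_of_gkGraph_connected hGK hx₀1 b.2)).2.2

end

theorem reduced_comGraph_connected_iff_gk_connected_general
    (G : Type*) [Group G] [Finite G] :
    ((comGraph G).induce {x : G | x ≠ 1}).Connected ↔ (gkGraph G).Connected :=
  ⟨gkGraph_connected_of_reduced_comGraph_connected, reduced_comGraph_connected_of_gkGraph_connected⟩

/-- For a nontrivial finite group `G` with trivial centre, the commuting graph
restricted to non-identity elements is connected iff the Gruenberg–Kegel graph of `G` is
connected. -/
theorem reduced_comGraph_connected_iff_gk_connected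
    (G : Type*) [Group G] [Finite G] [Nontrivial G]
    (hZ : Subgroup.center G = ⊥) :
    ((comGraph G).induce {x : G | x ≠ 1}).Connected ↔ (gkGraph G).Connected :=
  reduced_comGraph_connected_iff_gk_connected_general G
end
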